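/- arXiv:1811.09870 — 6 statements merged into one kernel-verified Lean document; each statement's English description precedes it below -/
import Mathlib

section
/- For any random variables X, Y and any p, q > 1 with 1/p + 1/q = 1, one has ‖XY‖_{ψ_1} ≤ ‖X‖_{ψ_p}·‖Y‖_{ψ_q}. -/
open MeasureTheory ProbabilityTheory
open scoped ENNReal

/-- The set of admissible constants in the definition of the exponential Orlicz
quasi-norm `‖X‖_{ψ_α}`. -/
def psiSet {Ω : Type*} [MeasurableSpace Ω] (μ : Measure Ω) (α : ℝ) (X : Ω → ℝ) : Set ℝ :=
  {c : ℝ | 0 < c ∧ ∫⁻ ω, ENNReal.ofReal (Real.exp (|X ω| ^ α / c ^ α)) ∂μ ≤ 2}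

/-- The exponential Orlicz quasi-norm `‖X‖_{ψ_α} = inf {c > 0 | E exp(|X|^α/c^α) ≤ 2}`. -/
noncomputable def psiNorm {Ω : Type*} [MeasurableSpace Ω] (μ : Measure Ω) (α : ℝ) (X : Ω → ℝ) : ℝ :=
  sInf (psiSet μ α X)

lemma mul_mem_psiSet
    {Ω : Type*} [MeasurableSpace Ω] (μ : Measure Ω)
    (X Y : Ω → ℝ) (hX : Measurable X) (hY : Measurable Y)
    (p q : ℝ) (hpq : p.HolderConjugate q)
    {a b : ℝ} (ha : a ∈ psiSet μ p X) (hb : b ∈ psiSet μ q Y) :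
    a * b ∈ psiSet μ 1 (fun ω => X ω * Y ω) := by
  obtain ⟨ha0, hEa⟩ := ha
  obtain ⟨hb0, hEb⟩ := hb
  set F : Ω → ℝ≥0∞ := fun ω => ENNReal.ofReal (Real.exp (|X ω| ^ p / a ^ p)) with hF
  set G : Ω → ℝ≥0∞ := fun ω => ENNReal.ofReal (Real.exp (|Y ω| ^ q / b ^ q)) with hG
  have hFmeas : Measurable F := by
    fun_prop
  have hGmeas : Measurable G := by
    fun_prop
  refine ⟨mul_pos ha0 hb0, ?_⟩
  have key : ∀ ω, ENNReal.ofReal (Real.exp (|X ω * Y ω| ^ (1:ℝ) / (a * b) ^ (1:ℝ)))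
      ≤ F ω ^ (1/p) * G ω ^ (1/q) := by
    intro ω
    have habs : |X ω * Y ω| ^ (1:ℝ) / (a * b) ^ (1:ℝ) = (|X ω| / a) * (|Y ω| / b) := by
      rw [Real.rpow_one, Real.rpow_one, abs_mul]
      field_simp
    have hyoung : (|X ω| / a) * (|Y ω| / b)
        ≤ (|X ω| ^ p / a ^ p) * (1/p) + (|Y ω| ^ q / b ^ q) * (1/q) := by
      have := Real.young_inequality_of_nonneg (a := |X ω| / a) (b := |Y ω| / b)
        (div_nonneg (abs_nonneg _) ha0.le) (div_nonneg (abs_nonneg _) hb0.le) hpq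
      rw [Real.div_rpow (abs_nonneg _) ha0.le, Real.div_rpow (abs_nonneg _) hb0.le] at this
      calc (|X ω| / a) * (|Y ω| / b)
          ≤ |X ω| ^ p / a ^ p / p + |Y ω| ^ q / b ^ q / q := this
        _ = (|X ω| ^ p / a ^ p) * (1/p) + (|Y ω| ^ q / b ^ q) * (1/q) := by ring
    have hexp : Real.exp (|X ω * Y ω| ^ (1:ℝ) / (a * b) ^ (1:ℝ))
        ≤ Real.exp (|X ω| ^ p / a ^ p) ^ (1/p) * Real.exp (|Y ω| ^ q / b ^ q) ^ (1/q) := by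
      rw [← Real.exp_mul, ← Real.exp_mul, ← Real.exp_add]
      exact Real.exp_le_exp.mpr (habs ▸ hyoung)
    calc ENNReal.ofReal (Real.exp (|X ω * Y ω| ^ (1:ℝ) / (a * b) ^ (1:ℝ)))
        ≤ ENNReal.ofReal (Real.exp (|X ω| ^ p / a ^ p) ^ (1/p)
            * Real.exp (|Y ω| ^ q / b ^ q) ^ (1/q)) := ENNReal.ofReal_le_ofReal hexp
      _ = F ω ^ (1/p) * G ω ^ (1/q) := by
          rw [ENNReal.ofReal_mul (Real.rpow_nonneg (Real.exp_pos _).le _),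
            ENNReal.ofReal_rpow_of_pos (Real.exp_pos _),
            ENNReal.ofReal_rpow_of_pos (Real.exp_pos _)]
  calc ∫⁻ ω, ENNReal.ofReal (Real.exp (|X ω * Y ω| ^ (1:ℝ) / (a * b) ^ (1:ℝ))) ∂μ
      ≤ ∫⁻ ω, ((fun ω => F ω ^ (1/p)) * (fun ω => G ω ^ (1/q))) ω ∂μ :=
        lintegral_mono fun ω => key ω
    _ ≤ (∫⁻ ω, (F ω ^ (1/p)) ^ p ∂μ) ^ (1/p) * (∫⁻ ω, (G ω ^ (1/q)) ^ q ∂μ) ^ (1/q) :=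
        ENNReal.lintegral_mul_le_Lp_mul_Lq μ hpq
          ((hFmeas.pow_const _).aemeasurable) ((hGmeas.pow_const _).aemeasurable)
    _ = (∫⁻ ω, F ω ∂μ) ^ (1/p) * (∫⁻ ω, G ω ∂μ) ^ (1/q) := by
        congr 1
        · congr 1
          refine lintegral_congr fun ω => ?_
          rw [← ENNReal.rpow_mul, one_div_mul_cancel hpq.ne_zero, ENNReal.rpow_one]
        · congr 1
          refine lintegral_congr fun ω => ?_
          rw [← ENNReal.rpow_mul, one_div_mul_cancel hpq.symm.ne_zero, ENNReal.rpow_one]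
    _ ≤ (2 : ℝ≥0∞) ^ (1/p) * (2 : ℝ≥0∞) ^ (1/q) := by
        gcongr <;> simp [hpq.nonneg, hpq.symm.nonneg, hEa, hEb]
    _ = 2 := by
        rw [← ENNReal.rpow_add _ _ (by norm_num) (by norm_num),
          show 1/p + 1/q = 1 by rw [one_div, one_div, hpq.inv_add_inv_eq_one],
          ENNReal.rpow_one]

theorem psiNorm_one_mul_le
    {Ω : Type*} [MeasurableSpace Ω] (μ : Measure Ω) [IsProbabilityMeasure μ]
    (X Y : Ω → ℝ) (hX : Measurable X) (hY : Measurable Y)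
    (p q : ℝ) (hp : 1 < p) (hq : 1 < q) (hpq : 1 / p + 1 / q = 1)
    (hXfin : (psiSet μ p X).Nonempty) (hYfin : (psiSet μ q Y).Nonempty) :
    psiNorm μ 1 (fun ω => X ω * Y ω) ≤ psiNorm μ p X * psiNorm μ q Y := by
  have hconj : p.HolderConjugate q := Real.holderConjugate_iff.mpr ⟨hp, by rw [← one_div, ← one_div]; exact hpq⟩
  have hbddT : BddBelow (psiSet μ 1 (fun ω => X ω * Y ω)) :=
    ⟨0, fun c hc => hc.1.le⟩
  -- step 1 : psiNorm T ≤ a * b for all admissible a b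
  have h1 : ∀ a ∈ psiSet μ p X, ∀ b ∈ psiSet μ q Y,
      psiNorm μ 1 (fun ω => X ω * Y ω) ≤ a * b := fun a ha b hb =>
    csInf_le hbddT (mul_mem_psiSet μ X Y hX hY p q hconj ha hb)
  -- step 2 : psiNorm T ≤ a * sInf (psiSet μ q Y)
  have h2 : ∀ a ∈ psiSet μ p X,
      psiNorm μ 1 (fun ω => X ω * Y ω) ≤ a * psiNorm μ q Y := by
    intro a ha
    rw [← div_le_iff₀' ha.1]
    refine le_csInf hYfin fun b hb => ?_
    rw [div_le_iff₀' ha.1]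
    exact h1 a ha b hb
  have hYnn : 0 ≤ psiNorm μ q Y := Real.sInf_nonneg fun b hb => hb.1.le
  have hXnn : 0 ≤ psiNorm μ p X := Real.sInf_nonneg fun a ha => ha.1.le
  rcases eq_or_lt_of_le hYnn with h0 | h0
  · obtain ⟨a, ha⟩ := hXfin
    calc psiNorm μ 1 (fun ω => X ω * Y ω) ≤ a * psiNorm μ q Y := h2 a ha
      _ = psiNorm μ p X * psiNorm μ q Y := by rw [← h0, mul_zero, mul_zero]
  · rw [mul_comm, ← div_le_iff₀' h0]
    refine le_csInf hXfin fun a ha => ?_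
    rw [div_le_iff₀' h0, mul_comm]
    exact h2 a ha
end

section
/- Let 0 < α ≤ 1 and X a random variable with ‖X‖_{ψ_α} < ∞, and let F be a sub-σ-field. Then for every t ≥ (2/α)^{1/α}·‖X‖_{ψ_α}, P(|E(X|F)| > t) ≤ 6·exp(−t^α / (2‖X‖_{ψ_α}^α)). -/
open MeasureTheory ProbabilityTheory

lemma exp_aux {α h u : ℝ} (hα0 : 0 < α) (hα1 : α ≤ 1) (hh : 9/(5*α) ≤ h) (hu : 1 ≤ u) :
    (2*u - 1) * Real.exp (h/2) ≤ Real.exp (h * u ^ α) := by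
  have hu0 : (0:ℝ) < u := lt_of_lt_of_le one_pos hu
  have hlog : 0 ≤ Real.log u := Real.log_nonneg hu
  have h1 : 1 + α * Real.log u ≤ u ^ α := by
    rw [Real.rpow_def_of_pos hu0]
    linarith [Real.add_one_le_exp (Real.log u * α)]
  have hha : 9/5 ≤ h * α := by
    rw [div_le_iff₀ (by positivity : (0:ℝ) < 5*α)] at hh
    nlinarith
  have hh0 : (0:ℝ) < h := lt_of_lt_of_le (by positivity) hh
  have h2 : 9/10 + Real.log u + h/2 ≤ h * u ^ α := by
    have hm := mul_le_mul_of_nonneg_left h1 hh0.le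
    have hm2 : (9/5) * Real.log u ≤ (h*α) * Real.log u :=
      mul_le_mul_of_nonneg_right hha hlog
    have hh95 : 9/5 ≤ h := by nlinarith
    nlinarith
  have e1 : Real.exp (9/10 + Real.log u + h/2) ≤ Real.exp (h * u^α) := Real.exp_le_exp.mpr h2
  rw [Real.exp_add, Real.exp_add, Real.exp_log hu0] at e1
  have e2 : (2:ℝ) ≤ Real.exp (9/10) := by
    rw [show (2:ℝ) = Real.exp (Real.log 2) by rw [Real.exp_log]; norm_num]
    exact Real.exp_le_exp.mpr (by linarith [Real.log_two_lt_d9])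
  have e3 : (2*u - 1) ≤ Real.exp (9/10) * u := by nlinarith
  calc (2*u-1) * Real.exp (h/2) ≤ (Real.exp (9/10) * u) * Real.exp (h/2) :=
        mul_le_mul_of_nonneg_right e3 (Real.exp_pos _).le
    _ ≤ Real.exp (h * u ^ α) := e1

lemma line_le_exp {α c t s : ℝ} (hα0 : 0 < α) (hα1 : α ≤ 1) (hc : 0 < c) (ht : 0 < t)
    (hh : 9/(5*α) ≤ t^α / c^α) (hs : 0 ≤ s) :
    Real.exp (t^α/(2*c^α)) * (2*s/t - 1) ≤ Real.exp (s^α / c^α) := by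
  have hcα : (0:ℝ) < c ^ α := Real.rpow_pos_of_pos hc α
  have htα : (0:ℝ) < t ^ α := Real.rpow_pos_of_pos ht α
  rcases le_or_gt s (t/2) with h2 | h2
  · have : 2*s/t - 1 ≤ 0 := by
      rw [sub_nonpos, div_le_one ht]; linarith
    nlinarith [Real.exp_pos (t^α/(2*c^α)), Real.exp_pos (s^α/c^α)]
  rcases le_or_gt s t with h3 | h3
  · have hs2 : t^α/2 ≤ s^α := by
      have e1 : (t/2)^α ≤ s^α := Real.rpow_le_rpow (by positivity) h2.le hα0.le
      have e2 : (t/2)^α = t^α/2^α := Real.div_rpow ht.le (by norm_num : (0:ℝ) ≤ 2) α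
      have e3 : (2:ℝ)^α ≤ 2 := by
        calc (2:ℝ)^α ≤ (2:ℝ)^(1:ℝ) := Real.rpow_le_rpow_of_exponent_le (by norm_num) hα1
          _ = 2 := Real.rpow_one 2
      have e4 : t^α/2 ≤ t^α/2^α := by
        apply div_le_div_of_nonneg_left htα.le (by positivity) e3
      rw [e2] at e1; linarith
    have e5 : t^α/(2*c^α) ≤ s^α/c^α := by
      rw [div_le_div_iff₀ (by positivity) (by positivity)]
      nlinarith
    have e6 : 2*s/t - 1 ≤ 1 := by
      rw [sub_le_iff_le_add, div_le_iff₀ ht]; linarith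
    calc Real.exp (t^α/(2*c^α)) * (2*s/t - 1) ≤ Real.exp (t^α/(2*c^α)) * 1 :=
          mul_le_mul_of_nonneg_left e6 (Real.exp_pos _).le
      _ = Real.exp (t^α/(2*c^α)) := mul_one _
      _ ≤ Real.exp (s^α/c^α) := Real.exp_le_exp.mpr e5
  · have hu : 1 ≤ s/t := (one_le_div ht).mpr h3.le
    have key := exp_aux hα0 hα1 hh hu
    have e7 : (t^α/c^α) * (s/t)^α = s^α/c^α := by
      rw [Real.div_rpow hs ht.le α]
      field_simp
    rw [e7] at key
    have e8 : (t^α/c^α)/2 = t^α/(2*c^α) := by ring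
    rw [e8] at key
    calc Real.exp (t^α/(2*c^α)) * (2*s/t - 1) = (2*(s/t) - 1) * Real.exp (t^α/(2*c^α)) := by ring
      _ ≤ Real.exp (s^α/c^α) := key

lemma psi_mem {Ω : Type*} [MeasurableSpace Ω] (μ : Measure Ω) (α : ℝ) (hα0 : 0 < α)
    (X : Ω → ℝ) (hfin : (psiSet μ α X).Nonempty) {c : ℝ} (hc : psiNorm μ α X < c) :
    c ∈ psiSet μ α X := by
  obtain ⟨b, hb, hbc⟩ := exists_lt_of_csInf_lt hfin hc
  obtain ⟨hb0, hbint⟩ := hb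
  have hc0 : 0 < c := hb0.trans hbc
  refine ⟨hc0, le_trans (lintegral_mono fun ω => ?_) hbint⟩
  apply ENNReal.ofReal_le_ofReal
  apply Real.exp_le_exp.mpr
  apply div_le_div_of_nonneg_left (Real.rpow_nonneg (abs_nonneg _) α)
    (Real.rpow_pos_of_pos hb0 α)
  exact Real.rpow_le_rpow hb0.le hbc.le hα0.le

lemma abs_le_mul_exp {α c : ℝ} (hα0 : 0 < α) (hc : 0 < c) {s : ℝ} (hs : 0 ≤ s) :
    s ≤ (c / α ^ (1/α)) * Real.exp (s ^ α / c ^ α) := by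
  have hαα : (0:ℝ) < α ^ (1/α) := Real.rpow_pos_of_pos hα0 _
  set y := s ^ α / c ^ α with hy
  have hy0 : 0 ≤ y := by positivity
  have h1 : α * y ≤ Real.exp (α * y) := by linarith [Real.add_one_le_exp (α * y)]
  have h2 : (α * y) ^ (1/α) ≤ (Real.exp (α * y)) ^ (1/α) :=
    Real.rpow_le_rpow (by positivity) h1 (by positivity)
  have h3 : (Real.exp (α * y)) ^ (1/α) = Real.exp y := by
    rw [← Real.exp_one_rpow (α * y), ← Real.rpow_mul (Real.exp_pos 1).le]
    field_simp
    exact Real.exp_one_rpow y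
  have h4 : (α * y) ^ (1/α) = α ^ (1/α) * (s / c) := by
    rw [Real.mul_rpow hα0.le hy0, hy, Real.div_rpow (Real.rpow_nonneg hs α)
      (Real.rpow_nonneg hc.le α), one_div, Real.rpow_rpow_inv hs hα0.ne',
      Real.rpow_rpow_inv hc.le hα0.ne']
  rw [h4, h3] at h2
  rw [div_mul_eq_mul_div, le_div_iff₀ hαα, mul_comm s (α ^ (1/α))]
  calc α ^ (1/α) * s = (α ^ (1/α) * (s / c)) * c := by field_simp
    _ ≤ Real.exp y * c := mul_le_mul_of_nonneg_right h2 hc.le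
    _ = c * Real.exp y := mul_comm _ _

theorem tail_bound_condexp
    {Ω : Type*} {m0 : MeasurableSpace Ω} (μ : Measure Ω) [IsProbabilityMeasure μ]
    (X : Ω → ℝ) (hX : Measurable X) (α : ℝ) (hα0 : 0 < α) (hα1 : α ≤ 1)
    (hfin : (psiSet (Ω := Ω) μ α X).Nonempty)
    (F : MeasurableSpace Ω) (hF : F ≤ m0)
    (t : ℝ) (ht : (2 / α) ^ (1 / α) * @psiNorm Ω m0 μ α X ≤ t) :
    μ {ω | t < |(μ[X|F]) ω|} ≤
      ENNReal.ofReal (6 * Real.exp (-(t ^ α) / (2 * @psiNorm Ω m0 μ α X ^ α))) := by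
  have hAF' : MeasurableSet[F] {ω | t < |(μ[X|F]) ω|} :=
    measurableSet_lt measurable_const (stronglyMeasurable_condExp.measurable.abs)
  letI _i : MeasurableSpace Ω := m0
  set K := @psiNorm Ω m0 μ α X with hKdef
  have hK0 : 0 ≤ K := le_csInf hfin (fun b hb => hb.1.le)
  rcases eq_or_lt_of_le hK0 with hK | hK
  · -- degenerate case K = 0
    have hKα : K ^ α = 0 := by rw [← hK, Real.zero_rpow hα0.ne']
    rw [hKα]
    have : -(t^α) / (2 * 0) = 0 := by simp
    rw [this, Real.exp_zero, mul_one]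
    calc μ {ω | t < |(μ[X|F]) ω|} ≤ 1 := prob_le_one
      _ ≤ ENNReal.ofReal 6 := by
          rw [show (1:ENNReal) = ENNReal.ofReal 1 by simp]
          exact ENNReal.ofReal_le_ofReal (by norm_num)
  · -- main case K > 0
    have hKα : (0:ℝ) < K ^ α := Real.rpow_pos_of_pos hK α
    have ht0 : 0 < t := lt_of_lt_of_le (by positivity) ht
    have htα : (0:ℝ) < t ^ α := Real.rpow_pos_of_pos ht0 α
    -- choice of c
    set ε : ℝ := min (1/9) (K^α / t^α) with hεdef
    have hε0 : 0 < ε := lt_min (by norm_num) (by positivity)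
    have hε9 : ε ≤ 1/9 := min_le_left _ _
    set c : ℝ := (1+ε) ^ (1/α) * K with hcdef
    have hc1 : (1:ℝ) < (1+ε) ^ (1/α) :=
      (Real.one_lt_rpow_iff_of_pos (by linarith)).mpr (Or.inl ⟨by linarith, by positivity⟩)
    have hKc : K < c := by
      calc K = 1 * K := (one_mul K).symm
        _ < (1+ε) ^ (1/α) * K := by exact mul_lt_mul_of_pos_right hc1 hK
    have hc0 : 0 < c := hK.trans hKc
    have hcα : c ^ α = (1+ε) * K ^ α := by
      rw [hcdef, Real.mul_rpow (by positivity) hK0, ← Real.rpow_mul (by positivity),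
        one_div, inv_mul_cancel₀ hα0.ne', Real.rpow_one]
    have hcα0 : (0:ℝ) < c ^ α := Real.rpow_pos_of_pos hc0 α
    have hKcα : K ^ α ≤ c ^ α := by rw [hcα]; nlinarith
    -- c is in the psi-set
    obtain ⟨-, hint2⟩ := @psi_mem Ω m0 μ α hα0 X hfin c hKc
    -- t^α ≥ (2/α) K^α
    have htKα : (2/α) * K^α ≤ t^α := by
      have h1 : ((2/α)^(1/α) * K) ^ α ≤ t ^ α :=
        Real.rpow_le_rpow (by positivity) ht hα0.le
      rwa [Real.mul_rpow (by positivity) hK0, ← Real.rpow_mul (by positivity),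
        one_div, inv_mul_cancel₀ hα0.ne', Real.rpow_one] at h1
    -- the h-bound
    have hh : 9/(5*α) ≤ t^α / c^α := by
      rw [div_le_div_iff₀ (by positivity) hcα0, hcα]
      nlinarith [mul_le_mul_of_nonneg_right htKα (by positivity : (0:ℝ) ≤ 5*α),
        mul_pos hKα hα0, (by field_simp : (2/α) * α = 2)]
    -- notation
    set M : ℝ := Real.exp (t^α/(2*c^α)) with hMdef
    have hM0 : 0 < M := Real.exp_pos _
    set g : Ω → ℝ := fun ω => Real.exp (|X ω| ^ α / c ^ α) with hgdef
    have hgm : Measurable[m0] g := Real.measurable_exp.comp (((Real.continuous_rpow_const hα0.le).measurable.comp hX.abs).div_const _)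
    have hgnn : ∀ ω, 0 ≤ g ω := fun ω => (Real.exp_pos _).le
    have hgint : Integrable g μ := by
      refine ⟨hgm.aestronglyMeasurable, ?_⟩
      rw [hasFiniteIntegral_iff_ofReal (ae_of_all _ hgnn)]
      exact lt_of_le_of_lt hint2 (by norm_num)
    have hXint : Integrable X μ := by
      have hCg : Integrable (fun ω => (c / α ^ (1/α)) * g ω) μ := hgint.const_mul _
      refine hCg.mono hX.aestronglyMeasurable (ae_of_all _ fun ω => ?_)
      rw [Real.norm_eq_abs, Real.norm_eq_abs]
      have h1 := abs_le_mul_exp hα0 hc0 (abs_nonneg (X ω))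
      have h2 : 0 ≤ (c / α ^ (1/α)) * g ω := by positivity
      rw [abs_of_nonneg h2]
      exact h1
    have hXabs : Integrable (fun ω => |X ω|) μ := hXint.abs
    -- the event
    set A : Set Ω := {ω | t < |(μ[X|F]) ω|} with hAdef
    have hAF : MeasurableSet[F] A := hAF'
    have hAm : MeasurableSet[m0] A := hF _ hAF
    have hμA : μ A ≠ ⊤ := measure_ne_top μ A
    have hEint : Integrable (fun ω => |(μ[X|F]) ω|) μ := integrable_condExp.abs
    have hint_f1 : Integrable (fun ω => 2*M/t * |(μ[X|F]) ω| - M) μ :=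
      (hEint.const_mul _).sub (integrable_const M)
    have hint_f2 : Integrable (fun ω => 2*M/t * |X ω| - M) μ :=
      (hXabs.const_mul _).sub (integrable_const M)
    -- step 1
    have step1 : M * (μ A).toReal ≤ ∫ ω in A, (2*M/t * |(μ[X|F]) ω| - M) ∂μ := by
      apply setIntegral_ge_of_const_le_real hAm hμA
      · intro x hx
        have hx' : t < |(μ[X|F]) x| := hx
        have hmm : 2*M/t * t ≤ 2*M/t * |(μ[X|F]) x| :=
          mul_le_mul_of_nonneg_left hx'.le (by positivity)
        have h2Mt : 2*M/t * t = 2*M := by field_simp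
        linarith
      · exact hint_f1.integrableOn
    -- expanding the set integrals
    have expand : ∀ (f : Ω → ℝ), Integrable f μ →
        ∫ ω in A, (2*M/t * f ω - M) ∂μ = 2*M/t * ∫ ω in A, f ω ∂μ - M * (μ A).toReal := by
      intro f hf
      rw [integral_sub ((hf.integrableOn).const_mul _)
        (integrableOn_const hμA),
        integral_const_mul, setIntegral_const, smul_eq_mul, measureReal_def]
      ring
    have step3 : ∫ ω in A, |(μ[X|F]) ω| ∂μ ≤ ∫ ω in A, |X ω| ∂μ :=
      setIntegral_abs_condExp_le hAF X
    have step5 : ∫ ω in A, (2*M/t * |X ω| - M) ∂μ ≤ ∫ ω in A, g ω ∂μ := by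
      apply setIntegral_mono_on hint_f2.integrableOn hgint.integrableOn hAm
      intro x hx
      have hpt := line_le_exp hα0 hα1 hc0 ht0 hh (abs_nonneg (X x))
      rw [hMdef]
      calc 2*Real.exp (t^α/(2*c^α))/t * |X x| - Real.exp (t^α/(2*c^α))
          = Real.exp (t^α/(2*c^α)) * (2*|X x|/t - 1) := by ring
        _ ≤ Real.exp (|X x|^α / c^α) := hpt
    have step6 : ∫ ω in A, g ω ∂μ ≤ ∫ ω, g ω ∂μ :=
      setIntegral_le_integral hgint (ae_of_all _ hgnn)
    have step7 : ∫ ω, g ω ∂μ ≤ 2 := by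
      rw [integral_eq_lintegral_of_nonneg_ae (ae_of_all _ hgnn) hgm.aestronglyMeasurable]
      calc (∫⁻ ω, ENNReal.ofReal (g ω) ∂μ).toReal ≤ (2:ENNReal).toReal :=
            ENNReal.toReal_mono (by norm_num) hint2
        _ = 2 := by norm_num
    -- combine
    have main : M * (μ A).toReal ≤ 2 := by
      calc M * (μ A).toReal ≤ ∫ ω in A, (2*M/t * |(μ[X|F]) ω| - M) ∂μ := step1
        _ = 2*M/t * ∫ ω in A, |(μ[X|F]) ω| ∂μ - M * (μ A).toReal := expand _ hEint
        _ ≤ 2*M/t * ∫ ω in A, |X ω| ∂μ - M * (μ A).toReal := by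
            have := mul_le_mul_of_nonneg_left step3 (by positivity : (0:ℝ) ≤ 2*M/t)
            linarith
        _ = ∫ ω in A, (2*M/t * |X ω| - M) ∂μ := (expand _ hXabs).symm
        _ ≤ ∫ ω in A, g ω ∂μ := step5
        _ ≤ ∫ ω, g ω ∂μ := step6
        _ ≤ 2 := step7
    have hPle : (μ A).toReal ≤ 2 * Real.exp (-(t^α/(2*c^α))) := by
      have h1 : (μ A).toReal ≤ 2 / M := by
        rw [le_div_iff₀ hM0]; linarith
      rw [Real.exp_neg, ← hMdef]
      rw [div_eq_mul_inv] at h1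
      exact h1
    have hfinal : 2 * Real.exp (-(t^α/(2*c^α))) ≤ 6 * Real.exp (-(t^α) / (2*K^α)) := by
      have hεt : t^α * ε ≤ K^α := by
        have h1 : ε ≤ K^α/t^α := min_le_right _ _
        rw [le_div_iff₀ htα] at h1; linarith
      have hdiff : t^α/(2*K^α) - t^α/(2*c^α) ≤ 1/2 := by
        have heq : t^α/(2*K^α) - t^α/(2*c^α) = t^α*ε/(2*c^α) := by
          rw [hcα]; field_simp; ring
        rw [heq]
        calc t^α*ε/(2*c^α) ≤ K^α/(2*c^α) := by gcongr
          _ ≤ K^α/(2*K^α) := by gcongr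
          _ = 1/2 := by field_simp
      have h2 : -(t^α/(2*c^α)) ≤ 1/2 + (-(t^α) / (2*K^α)) := by
        rw [neg_div]; linarith
      have h3 : Real.exp (-(t^α/(2*c^α))) ≤ Real.exp (1/2) * Real.exp (-(t^α)/(2*K^α)) := by
        rw [← Real.exp_add]; exact Real.exp_le_exp.mpr h2
      have h4 : Real.exp ((1:ℝ)/2) ≤ 3 := by
        have h6 := Real.exp_one_lt_d9
        have h5 : Real.exp ((1:ℝ)/2) ≤ Real.exp 1 := Real.exp_le_exp.mpr (by norm_num)
        linarith
      nlinarith [Real.exp_pos (-(t^α)/(2*K^α))]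
    calc μ A = ENNReal.ofReal ((μ A).toReal) := (ENNReal.ofReal_toReal hμA).symm
      _ ≤ ENNReal.ofReal (6 * Real.exp (-(t^α) / (2*K^α))) :=
          ENNReal.ofReal_le_ofReal (le_trans hPle hfinal)
end

section
/- Let (ξ_i)_{0≤i≤n−1} be i.i.d. random variables with E[exp(c^{−α}|ξ_i|^α)] ≤ 2 for some α ∈ (0,1] and c > 0. Set M := c·(3α^{−2}·log n)^{1/α} and U_i := ξ_i·1_{|ξ_i| > M}. Then for λ = (2^{1/α}·c)^{−1}, E[exp(λ^α·Σ_{i=0}^{n−1}(|U_i|^α + (E|U_i|)^α))] ≤ exp(8). -/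
open MeasureTheory ProbabilityTheory

/-- The paper's logarithm: `log x = ln (x ∨ e)`. -/
noncomputable def plog (x : ℝ) : ℝ := Real.log (max x (Real.exp 1))

lemma aux_lintegral_prod {Ω : Type*} [MeasurableSpace Ω] {μ : Measure Ω} [IsProbabilityMeasure μ]
    (G : ℕ → Ω → ENNReal) (hG : ∀ i, Measurable (G i))
    (hind : iIndepFun G μ) (n : ℕ) :
    ∫⁻ ω, ∏ i ∈ Finset.range n, G i ω ∂μ = ∏ i ∈ Finset.range n, ∫⁻ ω, G i ω ∂μ := by
  induction n with
  | zero => simp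
  | succ n ih =>
    have hprod : Measurable fun ω => ∏ i ∈ Finset.range n, G i ω :=
      Finset.measurable_prod _ fun i _ => hG i
    have hindf := hind.indepFun_prod_range_succ hG n
    have h := lintegral_mul_eq_lintegral_mul_lintegral_of_indepFun
      (μ := μ) (f := fun ω => ∏ i ∈ Finset.range n, G i ω) (g := G n) hprod (hG n) ?_
    · simp only [Finset.prod_range_succ, Pi.mul_apply] at h ⊢
      rw [h, ih]
    · have : (∏ j ∈ Finset.range n, G j) = fun ω => ∏ i ∈ Finset.range n, G i ω := by
        funext ω; simp
      rwa [this] at hindf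

set_option maxHeartbeats 2000000 in
theorem truncated_exponential_moment_bound
    {Ω : Type*} [MeasurableSpace Ω] (μ : Measure Ω) [IsProbabilityMeasure μ]
    (ξ : ℕ → Ω → ℝ) (hmeas : ∀ i, Measurable (ξ i))
    (hindep : iIndepFun ξ μ)
    (hident : ∀ i, IdentDistrib (ξ i) (ξ 0) μ μ)
    (α c : ℝ) (hα0 : 0 < α) (hα1 : α ≤ 1) (hc : 0 < c)
    (hpsi : ∀ i, ∫⁻ ω, ENNReal.ofReal (Real.exp (c ^ (-α) * |ξ i ω| ^ α)) ∂μ ≤ 2)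
    (n : ℕ)
    (M : ℝ) (hM : M = c * (3 * α ^ (-2 : ℝ) * plog n) ^ (1 / α))
    (U : ℕ → Ω → ℝ) (hU : ∀ i ω, U i ω = if M < |ξ i ω| then ξ i ω else 0)
    (lam : ℝ) (hlam : lam = (2 ^ (1 / α) * c)⁻¹) :
    ∫ ω, Real.exp (lam ^ α *
        ∑ i ∈ Finset.range n, (|U i ω| ^ α + (∫ ω', |U i ω'| ∂μ) ^ α)) ∂μ ≤
      Real.exp 8 := by
  have hα : α ≠ 0 := ne_of_gt hα0
  have he1 : (0:ℝ) < Real.exp 1 := Real.exp_pos 1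
  set L : ℝ := plog n with hLdef
  have hL1 : 1 ≤ L := by
    rw [hLdef]; unfold plog
    calc (1:ℝ) = Real.log (Real.exp 1) := (Real.log_exp 1).symm
    _ ≤ _ := Real.log_le_log he1 (le_max_right _ _)
  set S : ℝ := 3 * α ^ (-2 : ℝ) * L with hSdef
  clear_value L S
  have hs2 : α ^ (-2:ℝ) = α⁻¹ * α⁻¹ := by
    rw [show (-2:ℝ) = (-1) + (-1) by norm_num, Real.rpow_add hα0, Real.rpow_neg_one]
  have hsinv1 : 1 ≤ α⁻¹ := by
    have h1 : α * α⁻¹ = 1 := mul_inv_cancel₀ hα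
    have h2 : 0 < α⁻¹ := inv_pos.mpr hα0
    nlinarith
  have hSpos : 0 < S := by rw [hSdef, hs2]; positivity
  have h11 : 1 ≤ α⁻¹ * α⁻¹ := by nlinarith
  have hS3L : 3 * L ≤ S := by rw [hSdef, hs2]; nlinarith [h11, hL1]
  have hcα : (0:ℝ) < c ^ (-α) := Real.rpow_pos_of_pos hc _
  have hMα : c ^ (-α) * M ^ α = S := by
    rw [hM, Real.mul_rpow hc.le (Real.rpow_nonneg hSpos.le _),
      ← Real.rpow_mul hSpos.le, one_div_mul_cancel hα, Real.rpow_one,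
      ← mul_assoc, ← Real.rpow_add hc, neg_add_cancel, Real.rpow_zero, one_mul]
  have hMnn : 0 ≤ M := by
    rw [hM]; exact mul_nonneg hc.le (Real.rpow_nonneg hSpos.le _)
  have hlamα : lam ^ α = 2⁻¹ * c ^ (-α) := by
    rw [hlam, Real.inv_rpow (by positivity), Real.mul_rpow (by positivity) hc.le,
      ← Real.rpow_mul (by norm_num : (0:ℝ) ≤ 2), one_div_mul_cancel hα, Real.rpow_one,
      mul_inv, ← Real.rpow_neg hc.le]
  set K : ℝ := Real.exp (-(S/2)) with hKdef
  clear_value K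
  have hK0 : 0 < K := by rw [hKdef]; exact Real.exp_pos _
  -- threshold exceedance gives S ≤ c^(-α)|x|^α
  have hTS : ∀ i ω, M < |ξ i ω| → S ≤ c ^ (-α) * |ξ i ω| ^ α := by
    intro i ω h
    have h1 : M ^ α ≤ |ξ i ω| ^ α := Real.rpow_le_rpow hMnn h.le hα0.le
    calc S = c ^ (-α) * M ^ α := hMα.symm
    _ ≤ c ^ (-α) * |ξ i ω| ^ α := mul_le_mul_of_nonneg_left h1 hcα.le
  have hexp_half : ∀ t : ℝ, S ≤ t → Real.exp (t/2) ≤ K * Real.exp t := by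
    intro t ht
    have h1 : Real.exp (t/2) = Real.exp (-(t/2)) * Real.exp t := by
      rw [← Real.exp_add]; ring_nf
    rw [h1, hKdef]
    exact mul_le_mul_of_nonneg_right (Real.exp_le_exp.mpr (by linarith)) (Real.exp_pos t).le
  -- pointwise bound 1
  have hb1 : ∀ i ω, Real.exp (lam ^ α * |U i ω| ^ α) ≤
      1 + K * Real.exp (c ^ (-α) * |ξ i ω| ^ α) := by
    intro i ω
    rw [hU]
    by_cases h : M < |ξ i ω|
    · rw [if_pos h]
      have h2 : lam ^ α * |ξ i ω| ^ α = (c ^ (-α) * |ξ i ω| ^ α) / 2 := by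
        rw [hlamα]; ring
      rw [h2]
      have := hexp_half _ (hTS i ω h)
      linarith
    · rw [if_neg h, abs_zero, Real.zero_rpow hα, mul_zero, Real.exp_zero]
      have : 0 ≤ K * Real.exp (c ^ (-α) * |ξ i ω| ^ α) :=
        mul_nonneg hK0.le (Real.exp_pos _).le
      linarith
  -- constant C
  set C : ℝ := c * (2 / (Real.exp 1 * α)) ^ (1 / α) with hCdef
  clear_value C
  have hC0 : 0 < C := by
    rw [hCdef]; positivity
  have hrpow_exp : ∀ u v : ℝ, (Real.exp u) ^ (v:ℝ) = Real.exp (u * v) := by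
    intro u v; rw [← Real.exp_mul]
  -- pointwise bound 2
  have hb2 : ∀ i ω, |U i ω| ≤ C * K * Real.exp (c ^ (-α) * |ξ i ω| ^ α) := by
    intro i ω
    rw [hU]
    by_cases h : M < |ξ i ω|
    · rw [if_pos h]
      set t : ℝ := c ^ (-α) * |ξ i ω| ^ α with htdef
      have htnn : 0 ≤ t := by positivity
      have hx : |ξ i ω| = c * t ^ (1/α) := by
        rw [htdef, Real.mul_rpow hcα.le (Real.rpow_nonneg (abs_nonneg _) _),
          ← Real.rpow_mul hc.le, ← Real.rpow_mul (abs_nonneg _)]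
        have e1 : -α * (1/α) = -1 := by field_simp
        have e2 : α * (1/α) = 1 := by field_simp
        rw [e1, e2, Real.rpow_neg_one, Real.rpow_one]
        field_simp
      have hkey : t ≤ (2 / (Real.exp 1 * α)) * Real.exp (α * t / 2) := by
        have h1 : α * t / 2 ≤ Real.exp (α * t / 2 - 1) := by
          have := Real.add_one_le_exp (α * t / 2 - 1); linarith
        have h2 : Real.exp (α * t / 2) = Real.exp (α * t / 2 - 1) * Real.exp 1 := by
          rw [← Real.exp_add]; ring_nf
        rw [h2]
        have h3 : (2 / (Real.exp 1 * α)) * (Real.exp (α * t / 2 - 1) * Real.exp 1)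
            = (2/α) * Real.exp (α * t / 2 - 1) := by field_simp
        rw [h3]
        have h4 : (2/α) * (α * t / 2) ≤ (2/α) * Real.exp (α * t / 2 - 1) :=
          mul_le_mul_of_nonneg_left h1 (by positivity)
        calc t = (2/α) * (α * t / 2) := by field_simp
        _ ≤ _ := h4
      have hstep : t ^ (1/α) ≤ (2 / (Real.exp 1 * α)) ^ (1/α) * Real.exp (t/2) := by
        have h4 : t ^ (1/α) ≤ ((2 / (Real.exp 1 * α)) * Real.exp (α * t / 2)) ^ (1/α) :=
          Real.rpow_le_rpow htnn hkey (by positivity)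
        rw [Real.mul_rpow (by positivity) (Real.exp_pos _).le, hrpow_exp] at h4
        have e3 : α * t / 2 * (1/α) = t / 2 := by field_simp
        rwa [e3] at h4
      have hSt : S ≤ t := hTS i ω h
      have h5 := hexp_half t hSt
      calc |ξ i ω| = c * t ^ (1/α) := hx
      _ ≤ c * ((2 / (Real.exp 1 * α)) ^ (1/α) * Real.exp (t/2)) :=
          mul_le_mul_of_nonneg_left hstep hc.le
      _ ≤ c * ((2 / (Real.exp 1 * α)) ^ (1/α) * (K * Real.exp t)) := by
          have hpow : (0:ℝ) ≤ (2 / (Real.exp 1 * α)) ^ (1/α) := Real.rpow_nonneg (by positivity) _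
          exact mul_le_mul_of_nonneg_left (mul_le_mul_of_nonneg_left h5 hpow) hc.le
      _ = C * K * Real.exp t := by rw [hCdef]; ring
    · rw [if_neg h, abs_zero]
      exact mul_nonneg (mul_nonneg hC0.le hK0.le) (Real.exp_pos _).le
  -- measurability
  have hUmeas : ∀ i, Measurable (U i) := by
    intro i
    have : U i = fun ω => if M < |ξ i ω| then ξ i ω else 0 := funext (hU i)
    rw [this]
    exact Measurable.ite (measurableSet_lt measurable_const (hmeas i).abs) (hmeas i)
      measurable_const
  have hrpm : Measurable fun x : ℝ => x ^ α := (Real.continuous_rpow_const hα0.le).measurable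
  have hTmeas : ∀ i, Measurable fun ω => Real.exp (c ^ (-α) * |ξ i ω| ^ α) := fun i =>
    Real.measurable_exp.comp (measurable_const.mul (hrpm.comp (hmeas i).abs))
  -- bound on ∫ |U i|
  have hbnn : ∀ i, 0 ≤ ∫ ω', |U i ω'| ∂μ := fun i => integral_nonneg fun ω => abs_nonneg _
  have hble : ∀ i, ∫ ω', |U i ω'| ∂μ ≤ C * K * 2 := by
    intro i
    have heq : ∫ ω', |U i ω'| ∂μ = (∫⁻ ω', ENNReal.ofReal |U i ω'| ∂μ).toReal :=
      integral_eq_lintegral_of_nonneg_ae (Filter.Eventually.of_forall fun ω => abs_nonneg _)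
        (hUmeas i).abs.aestronglyMeasurable
    rw [heq]
    have hlin : ∫⁻ ω', ENNReal.ofReal |U i ω'| ∂μ ≤ ENNReal.ofReal (C * K) * 2 := by
      calc ∫⁻ ω', ENNReal.ofReal |U i ω'| ∂μ
          ≤ ∫⁻ ω', ENNReal.ofReal (C * K) *
              ENNReal.ofReal (Real.exp (c ^ (-α) * |ξ i ω'| ^ α)) ∂μ := by
            apply lintegral_mono
            intro ω
            dsimp only
            rw [← ENNReal.ofReal_mul (mul_nonneg hC0.le hK0.le)]
            exact ENNReal.ofReal_le_ofReal (hb2 i ω)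
      _ = ENNReal.ofReal (C * K) *
            ∫⁻ ω', ENNReal.ofReal (Real.exp (c ^ (-α) * |ξ i ω'| ^ α)) ∂μ :=
            lintegral_const_mul _ (hTmeas i).ennreal_ofReal
      _ ≤ ENNReal.ofReal (C * K) * 2 := mul_le_mul_right (hpsi i) _
    calc (∫⁻ ω', ENNReal.ofReal |U i ω'| ∂μ).toReal
        ≤ (ENNReal.ofReal (C * K) * 2).toReal := ENNReal.toReal_mono
          (ENNReal.mul_ne_top ENNReal.ofReal_ne_top (by norm_num)) hlin
    _ = C * K * 2 := by
        rw [ENNReal.toReal_mul, ENNReal.toReal_ofReal (mul_nonneg hC0.le hK0.le),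
          ENNReal.toReal_ofNat]
  -- numeric: n ≤ exp L
  have hnL : (n:ℝ) ≤ Real.exp L := by
    rcases Nat.eq_zero_or_pos n with h0 | hpos
    · rw [h0]; exact_mod_cast (Real.exp_pos L).le
    · have hn1 : (1:ℝ) ≤ (n:ℝ) := by exact_mod_cast hpos
      have hlog : Real.log n ≤ L := by
        rw [hLdef]; unfold plog
        exact Real.log_le_log (by linarith) (le_max_left _ _)
      calc (n:ℝ) = Real.exp (Real.log n) := (Real.exp_log (by linarith)).symm
      _ ≤ Real.exp L := Real.exp_le_exp.mpr hlog
  have hnK : (n:ℝ) * K ≤ 1 := by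
    have h1 : Real.exp L * K = Real.exp (L - S/2) := by rw [hKdef, ← Real.exp_add]; ring_nf
    have h2 : L - S/2 ≤ 0 := by linarith
    calc (n:ℝ) * K ≤ Real.exp L * K := mul_le_mul_of_nonneg_right hnL hK0.le
    _ = Real.exp (L - S/2) := h1
    _ ≤ Real.exp 0 := Real.exp_le_exp.mpr h2
    _ = 1 := Real.exp_zero
  -- per-factor lintegral bound
  have hGle : ∀ i, ∫⁻ ω, ENNReal.ofReal (Real.exp (lam ^ α * |U i ω| ^ α)) ∂μ ≤
      ENNReal.ofReal (Real.exp (2 * K)) := by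
    intro i
    calc ∫⁻ ω, ENNReal.ofReal (Real.exp (lam ^ α * |U i ω| ^ α)) ∂μ
        ≤ ∫⁻ ω, ((1:ENNReal) + ENNReal.ofReal K *
            ENNReal.ofReal (Real.exp (c ^ (-α) * |ξ i ω| ^ α))) ∂μ := by
          apply lintegral_mono
          intro ω
          calc ENNReal.ofReal (Real.exp (lam ^ α * |U i ω| ^ α))
              ≤ ENNReal.ofReal (1 + K * Real.exp (c ^ (-α) * |ξ i ω| ^ α)) :=
                ENNReal.ofReal_le_ofReal (hb1 i ω)
          _ = 1 + ENNReal.ofReal K * ENNReal.ofReal (Real.exp (c ^ (-α) * |ξ i ω| ^ α)) := by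
                rw [ENNReal.ofReal_add (by norm_num)
                    (mul_nonneg hK0.le (Real.exp_pos _).le), ENNReal.ofReal_one,
                  ENNReal.ofReal_mul hK0.le]
    _ = 1 + ENNReal.ofReal K * ∫⁻ ω, ENNReal.ofReal (Real.exp (c ^ (-α) * |ξ i ω| ^ α)) ∂μ := by
          rw [lintegral_add_left measurable_const, lintegral_one, measure_univ,
            lintegral_const_mul _ (hTmeas i).ennreal_ofReal]
    _ ≤ 1 + ENNReal.ofReal K * 2 := add_le_add_right (mul_le_mul_right (hpsi i) _) 1
    _ = ENNReal.ofReal (1 + K * 2) := by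
          rw [ENNReal.ofReal_add (by norm_num) (by linarith : (0:ℝ) ≤ K * 2),
            ENNReal.ofReal_one, ENNReal.ofReal_mul hK0.le, ENNReal.ofReal_ofNat]
    _ ≤ ENNReal.ofReal (Real.exp (2 * K)) := ENNReal.ofReal_le_ofReal (by
          have := Real.add_one_le_exp (2 * K); linarith)
  -- the constant exponent bound
  have hlamαnn : 0 ≤ lam ^ α := by rw [hlamα]; positivity
  have hBle : lam ^ α * ∑ i ∈ Finset.range n, (∫ ω', |U i ω'| ∂μ) ^ α ≤ 1 := by
    have hterm : ∀ i ∈ Finset.range n, (∫ ω', |U i ω'| ∂μ) ^ α ≤ (C * K * 2) ^ α :=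
      fun i _ => Real.rpow_le_rpow (hbnn i) (hble i) hα0.le
    have hsum : ∑ i ∈ Finset.range n, (∫ ω', |U i ω'| ∂μ) ^ α ≤ n * (C * K * 2) ^ α := by
      calc ∑ i ∈ Finset.range n, (∫ ω', |U i ω'| ∂μ) ^ α
          ≤ ∑ _i ∈ Finset.range n, (C * K * 2) ^ α := Finset.sum_le_sum hterm
      _ = n * (C * K * 2) ^ α := by rw [Finset.sum_const, Finset.card_range, nsmul_eq_mul]
    have e1 : (C * K * 2) ^ α = C ^ α * K ^ α * 2 ^ α := by
      rw [Real.mul_rpow (mul_nonneg hC0.le hK0.le) (by norm_num),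
        Real.mul_rpow hC0.le hK0.le]
    have e2 : C ^ α = c ^ α * (2 / (Real.exp 1 * α)) := by
      rw [hCdef, Real.mul_rpow hc.le (Real.rpow_nonneg (by positivity) _),
        ← Real.rpow_mul (by positivity), one_div_mul_cancel hα, Real.rpow_one]
    have e3 : K ^ α = Real.exp (-(S/2) * α) := by rw [hKdef, hrpow_exp]
    have hccα : c ^ (-α) * c ^ α = 1 := by
      rw [← Real.rpow_add hc, neg_add_cancel, Real.rpow_zero]
    have h2α : (2:ℝ) ^ α ≤ 2 := by
      calc (2:ℝ) ^ α ≤ (2:ℝ) ^ (1:ℝ) :=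
        Real.rpow_le_rpow_of_exponent_le (by norm_num) hα1
      _ = 2 := Real.rpow_one 2
    have h2α0 : (0:ℝ) ≤ (2:ℝ) ^ α := by positivity
    have e4 : lam ^ α * (C * K * 2) ^ α =
        2⁻¹ * 2 ^ α * ((2 / (Real.exp 1 * α)) * Real.exp (-(S/2) * α)) := by
      rw [hlamα, e1, e2, e3]
      linear_combination (2⁻¹ * 2 ^ α * (2 / (Real.exp 1 * α)) * Real.exp (-(S/2) * α)) * hccα
    have hD0 : (0:ℝ) ≤ (2 / (Real.exp 1 * α)) * Real.exp (-(S/2) * α) := by positivity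
    have hCKα : lam ^ α * (C * K * 2) ^ α ≤
        (2 / (Real.exp 1 * α)) * Real.exp (-(S/2) * α) := by
      rw [e4]
      calc 2⁻¹ * 2 ^ α * ((2 / (Real.exp 1 * α)) * Real.exp (-(S/2) * α))
          ≤ 1 * ((2 / (Real.exp 1 * α)) * Real.exp (-(S/2) * α)) :=
            mul_le_mul_of_nonneg_right (by linarith) hD0
      _ = _ := one_mul _
    have e5 : -(S/2) * α = -(3/2) * α⁻¹ * L := by
      rw [hSdef, hs2]; field_simp
    have key : (n:ℝ) * ((2 / (Real.exp 1 * α)) * Real.exp (-(S/2) * α)) ≤ 1 := by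
      rw [e5]
      have hEp : (0:ℝ) < Real.exp ((3/2) * α⁻¹) := Real.exp_pos _
      have step1 : (n:ℝ) * ((2 / (Real.exp 1 * α)) * Real.exp (-(3/2) * α⁻¹ * L)) ≤
          Real.exp L * ((2 / (Real.exp 1 * α)) * Real.exp (-(3/2) * α⁻¹ * L)) :=
        mul_le_mul_of_nonneg_right hnL (by positivity)
      have step2 : Real.exp L * ((2 / (Real.exp 1 * α)) * Real.exp (-(3/2) * α⁻¹ * L)) =
          (2 / (Real.exp 1 * α)) * Real.exp (L * (1 - (3/2) * α⁻¹)) := by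
        rw [show Real.exp L * ((2 / (Real.exp 1 * α)) * Real.exp (-(3/2) * α⁻¹ * L)) =
          (2 / (Real.exp 1 * α)) * (Real.exp L * Real.exp (-(3/2) * α⁻¹ * L)) from by ring,
          ← Real.exp_add]
        congr 1
        ring
      have step3 : L * (1 - (3/2) * α⁻¹) ≤ 1 - (3/2) * α⁻¹ := by
        have hr : 1 - (3/2) * α⁻¹ ≤ 0 := by linarith
        calc L * (1 - (3/2) * α⁻¹) ≤ 1 * (1 - (3/2) * α⁻¹) :=
          mul_le_mul_of_nonpos_right hL1 hr
        _ = 1 - (3/2) * α⁻¹ := one_mul _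
      have step4 : (2 / (Real.exp 1 * α)) * Real.exp (1 - (3/2) * α⁻¹) =
          2 * α⁻¹ * Real.exp (-((3/2) * α⁻¹)) := by
        rw [show (1 - (3/2) * α⁻¹ : ℝ) = 1 + -((3/2) * α⁻¹) by ring, Real.exp_add]
        field_simp
      have step5 : 2 * α⁻¹ * Real.exp (-((3/2) * α⁻¹)) ≤ 1 := by
        have h1 : (3/2) * α⁻¹ ≤ Real.exp ((3/2) * α⁻¹ - 1) := by
          have := Real.add_one_le_exp ((3/2) * α⁻¹ - 1); linarith
        have h2 : Real.exp ((3/2) * α⁻¹) = Real.exp ((3/2) * α⁻¹ - 1) * Real.exp 1 := by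
          rw [← Real.exp_add]; ring_nf
        have he2 : (2:ℝ) ≤ Real.exp 1 := by
          have := Real.add_one_le_exp (1:ℝ); linarith
        have h3 : 2 * α⁻¹ ≤ Real.exp ((3/2) * α⁻¹) := by
          rw [h2]; nlinarith
        rw [Real.exp_neg, ← div_eq_mul_inv, div_le_one hEp]
        exact h3
      calc (n:ℝ) * ((2 / (Real.exp 1 * α)) * Real.exp (-(3/2) * α⁻¹ * L))
          ≤ (2 / (Real.exp 1 * α)) * Real.exp (L * (1 - (3/2) * α⁻¹)) := by
            rw [← step2]; exact step1
      _ ≤ (2 / (Real.exp 1 * α)) * Real.exp (1 - (3/2) * α⁻¹) :=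
            mul_le_mul_of_nonneg_left (Real.exp_le_exp.mpr step3) (by positivity)
      _ = 2 * α⁻¹ * Real.exp (-((3/2) * α⁻¹)) := step4
      _ ≤ 1 := step5
    calc lam ^ α * ∑ i ∈ Finset.range n, (∫ ω', |U i ω'| ∂μ) ^ α
        ≤ lam ^ α * ((n:ℝ) * (C * K * 2) ^ α) := mul_le_mul_of_nonneg_left hsum hlamαnn
    _ = (n:ℝ) * (lam ^ α * (C * K * 2) ^ α) := by ring
    _ ≤ (n:ℝ) * ((2 / (Real.exp 1 * α)) * Real.exp (-(S/2) * α)) :=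
          mul_le_mul_of_nonneg_left hCKα (Nat.cast_nonneg n)
    _ ≤ 1 := key
  -- assemble
  set φ : ℝ → ENNReal := fun x =>
    ENNReal.ofReal (Real.exp (lam ^ α * |if M < |x| then x else 0| ^ α)) with hφdef
  have hφm : Measurable φ := by
    rw [hφdef]
    exact (Real.measurable_exp.comp (measurable_const.mul
      (hrpm.comp (Measurable.ite (measurableSet_lt measurable_const measurable_abs)
        measurable_id measurable_const).abs))).ennreal_ofReal
  have hGind : iIndepFun (fun i => φ ∘ ξ i) μ :=
    hindep.comp (fun _ => φ) (fun _ => hφm)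
  have hGmeas : ∀ i, Measurable (φ ∘ ξ i) := fun i => hφm.comp (hmeas i)
  have hGeq : ∀ i ω, (φ ∘ ξ i) ω = ENNReal.ofReal (Real.exp (lam ^ α * |U i ω| ^ α)) := by
    intro i ω
    rw [hU i ω]
    rfl
  have hintmeas : Measurable fun ω => Real.exp (lam ^ α *
      ∑ i ∈ Finset.range n, (|U i ω| ^ α + (∫ ω', |U i ω'| ∂μ) ^ α)) :=
    Real.measurable_exp.comp (measurable_const.mul (Finset.measurable_sum _ fun i _ =>
      ((hrpm.comp (hUmeas i).abs).add_const _)))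
  have hnonneg : 0 ≤ᵐ[μ] fun ω => Real.exp (lam ^ α *
      ∑ i ∈ Finset.range n, (|U i ω| ^ α + (∫ ω', |U i ω'| ∂μ) ^ α)) :=
    Filter.Eventually.of_forall fun ω => (Real.exp_pos _).le
  rw [integral_eq_lintegral_of_nonneg_ae hnonneg hintmeas.aestronglyMeasurable]
  have hsplit : ∀ ω : Ω, ENNReal.ofReal (Real.exp (lam ^ α * ∑ i ∈ Finset.range n,
      (|U i ω| ^ α + (∫ ω', |U i ω'| ∂μ) ^ α))) =
      ENNReal.ofReal (Real.exp (lam ^ α * ∑ i ∈ Finset.range n, (∫ ω', |U i ω'| ∂μ) ^ α)) *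
      ∏ i ∈ Finset.range n, (φ ∘ ξ i) ω := by
    intro ω
    have h1 : lam ^ α * ∑ i ∈ Finset.range n, (|U i ω| ^ α + (∫ ω', |U i ω'| ∂μ) ^ α) =
        lam ^ α * ∑ i ∈ Finset.range n, (∫ ω', |U i ω'| ∂μ) ^ α +
        ∑ i ∈ Finset.range n, lam ^ α * |U i ω| ^ α := by
      rw [Finset.sum_add_distrib, mul_add, Finset.mul_sum, add_comm]
    rw [h1, Real.exp_add, Real.exp_sum, ENNReal.ofReal_mul (Real.exp_pos _).le,
      ENNReal.ofReal_prod_of_nonneg (fun i _ => (Real.exp_pos _).le)]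
    congr 1
    exact Finset.prod_congr rfl fun i _ => (hGeq i ω).symm
  have hmain : ∫⁻ ω, ENNReal.ofReal (Real.exp (lam ^ α * ∑ i ∈ Finset.range n,
      (|U i ω| ^ α + (∫ ω', |U i ω'| ∂μ) ^ α))) ∂μ ≤ ENNReal.ofReal (Real.exp 8) := by
    calc ∫⁻ ω, ENNReal.ofReal (Real.exp (lam ^ α * ∑ i ∈ Finset.range n,
          (|U i ω| ^ α + (∫ ω', |U i ω'| ∂μ) ^ α))) ∂μ
        = ENNReal.ofReal (Real.exp (lam ^ α * ∑ i ∈ Finset.range n,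
            (∫ ω', |U i ω'| ∂μ) ^ α)) * ∫⁻ ω, ∏ i ∈ Finset.range n, (φ ∘ ξ i) ω ∂μ := by
          rw [← lintegral_const_mul _ (Finset.measurable_prod _ fun i _ => hGmeas i)]
          exact lintegral_congr fun ω => hsplit ω
    _ = ENNReal.ofReal (Real.exp (lam ^ α * ∑ i ∈ Finset.range n,
            (∫ ω', |U i ω'| ∂μ) ^ α)) * ∏ i ∈ Finset.range n, ∫⁻ ω, (φ ∘ ξ i) ω ∂μ := by
          rw [aux_lintegral_prod _ hGmeas hGind n]
    _ ≤ ENNReal.ofReal (Real.exp 1) *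
          ∏ _i ∈ Finset.range n, ENNReal.ofReal (Real.exp (2 * K)) := by
          apply mul_le_mul' (ENNReal.ofReal_le_ofReal (Real.exp_le_exp.mpr hBle))
          apply Finset.prod_le_prod'
          intro i _
          calc ∫⁻ ω, (φ ∘ ξ i) ω ∂μ
              = ∫⁻ ω, ENNReal.ofReal (Real.exp (lam ^ α * |U i ω| ^ α)) ∂μ :=
                lintegral_congr fun ω => hGeq i ω
          _ ≤ ENNReal.ofReal (Real.exp (2 * K)) := hGle i
    _ = ENNReal.ofReal (Real.exp 1) * ENNReal.ofReal (Real.exp (2 * K)) ^ n := by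
          rw [Finset.prod_const, Finset.card_range]
    _ = ENNReal.ofReal (Real.exp 1) * ENNReal.ofReal (Real.exp (2 * K) ^ n) := by
          rw [ENNReal.ofReal_pow (Real.exp_pos _).le]
    _ = ENNReal.ofReal (Real.exp 1) * ENNReal.ofReal (Real.exp (n * (2 * K))) := by
          rw [← Real.exp_nat_mul]
    _ ≤ ENNReal.ofReal (Real.exp 1) * ENNReal.ofReal (Real.exp 2) := by
          apply mul_le_mul_right
          apply ENNReal.ofReal_le_ofReal
          apply Real.exp_le_exp.mpr
          calc (n:ℝ) * (2 * K) = 2 * ((n:ℝ) * K) := by ring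
          _ ≤ 2 * 1 := by linarith [hnK]
          _ = 2 := mul_one 2
    _ = ENNReal.ofReal (Real.exp 1 * Real.exp 2) :=
          (ENNReal.ofReal_mul (Real.exp_pos _).le).symm
    _ ≤ ENNReal.ofReal (Real.exp 8) := ENNReal.ofReal_le_ofReal (by
          rw [← Real.exp_add]
          exact Real.exp_le_exp.mpr (by norm_num))
  calc (∫⁻ ω, ENNReal.ofReal (Real.exp (lam ^ α * ∑ i ∈ Finset.range n,
        (|U i ω| ^ α + (∫ ω', |U i ω'| ∂μ) ^ α))) ∂μ).toReal
      ≤ (ENNReal.ofReal (Real.exp 8)).toReal :=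
        ENNReal.toReal_mono ENNReal.ofReal_ne_top hmain
  _ = Real.exp 8 := ENNReal.toReal_ofReal (Real.exp_pos _).le
end

section
/- Let (X_i)_{i≥1} be a bounded (|X_i| ≤ M), centered, stationary, 1-dependent process and suppose there is a filtration (F_i)_{i≥0} such that: X_i is F_i-measurable; Z_i := X_i + E(X_{i+1}|F_i) − E(X_i|F_{i−1}) forms a stationary sequence for i ≥ 1; (E(X_i|F_{i−1}))_{i≥1} is stationary; and E(X_i|F_{i−1}) is independent of X_{i+1} for all i ≥ 1. Then E[Z_i²] = E[X_1²] + 2·E[X_1X_2]. -/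
open MeasureTheory ProbabilityTheory

/-- A real-valued discrete-time process is stationary if all of its shifts have the
same (joint) distribution as the process itself. -/
def Stationary {Ω : Type*} [MeasurableSpace Ω] (μ : Measure Ω) (W : ℕ → Ω → ℝ) : Prop :=
  ∀ k : ℕ, IdentDistrib (fun ω (i : ℕ) => W (i + k) ω) (fun ω (i : ℕ) => W i ω) μ μ

/-- A process `W` is `m`-dependent if for every `k` the past `(W i)_{i ≤ k}` is
independent of the future `(W i)_{i ≥ k + m + 1}`. -/
def MDependent {Ω : Type*} [MeasurableSpace Ω] (μ : Measure Ω) (m : ℕ) (W : ℕ → Ω → ℝ) : Prop :=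
  ∀ k : ℕ, ProbabilityTheory.Indep
    (⨆ i ∈ Set.Iic k, MeasurableSpace.comap (W i) inferInstance)
    (⨆ i ∈ Set.Ici (k + m + 1), MeasurableSpace.comap (W i) inferInstance) μ

theorem variance_formula_one_dependent
    {Ω : Type*} {m0 : MeasurableSpace Ω} (μ : Measure Ω) [IsProbabilityMeasure μ]
    (X : ℕ → Ω → ℝ) (hmeas : ∀ i, Measurable (X i))
    (M : ℝ) (hbdd : ∀ i ≥ 1, ∀ᵐ ω ∂μ, |X i ω| ≤ M)
    (hcent : ∀ i ≥ 1, ∫ ω, X i ω ∂μ = 0)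
    (hstat : Stationary μ (fun i => X (i + 1)))
    (hdep : MDependent μ 1 (fun i => X (i + 1)))
    (F : ℕ → MeasurableSpace Ω) (hF : ∀ i, F i ≤ m0) (hFmono : Monotone F)
    (hadapted : ∀ i, Measurable[F i] (X i))
    (Z : ℕ → Ω → ℝ)
    (hZ : ∀ i ω, Z i ω = X i ω + (μ[X (i + 1)|F i]) ω - (μ[X i|F (i - 1)]) ω)
    (hZstat : Stationary μ (fun i => Z (i + 1)))
    (hCEstat : Stationary μ (fun i => μ[X (i + 1)|F i]))
    (hCEindep : ∀ i ≥ 1, IndepFun (μ[X i|F (i - 1)]) (X (i + 1)) μ) :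
    ∀ i ≥ 1, ∫ ω, (Z i ω) ^ 2 ∂μ =
      ∫ ω, (X 1 ω) ^ 2 ∂μ + 2 * ∫ ω, X 1 ω * X 2 ω ∂μ := by
  intro i hi
  -- M is nonnegative
  have hM0 : 0 ≤ M := by
    obtain ⟨ω, hω⟩ := (hbdd 1 le_rfl).exists
    exact (abs_nonneg _).trans hω
  -- integrability of bounded functions
  have hmulint : ∀ f g : Ω → ℝ, AEStronglyMeasurable f μ → AEStronglyMeasurable g μ →
      (∀ᵐ ω ∂μ, |f ω| ≤ M) → (∀ᵐ ω ∂μ, |g ω| ≤ M) →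
      Integrable (fun ω => f ω * g ω) μ := by
    intro f g hf hg hfb hgb
    refine (integrable_const (M * M)).mono' (hf.mul hg) ?_
    filter_upwards [hfb, hgb] with ω h1 h2
    rw [Real.norm_eq_abs, abs_mul]
    exact mul_le_mul h1 h2 (abs_nonneg _) hM0
  have hXint : ∀ j, 1 ≤ j → Integrable (X j) μ := by
    intro j hj
    refine (integrable_const M).mono' (hmeas j).aestronglyMeasurable ?_
    filter_upwards [hbdd j hj] with ω h
    rwa [Real.norm_eq_abs]
  -- bounds on conditional expectations
  have hYbdd : ∀ j (m : MeasurableSpace Ω), 1 ≤ j → (∀ᵐ ω ∂μ, |(μ[X j|m]) ω| ≤ M) := by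
    intro j m hj
    have h1 : ∀ᵐ ω ∂μ, |X j ω| ≤ (M.toNNReal : ℝ) := by
      filter_upwards [hbdd j hj] with ω h
      rwa [Real.coe_toNNReal M hM0]
    have := ae_bdd_condExp_of_ae_bdd (m := m) h1
    filter_upwards [this] with ω h
    rwa [Real.coe_toNNReal M hM0] at h
  -- the three pieces
  set a : Ω → ℝ := X i with ha
  set b : Ω → ℝ := μ[X (i + 1)|F i] with hb
  set c : Ω → ℝ := μ[X i|F (i - 1)] with hc
  have hameas : AEStronglyMeasurable a μ := (hmeas i).aestronglyMeasurable
  have hbmeas : AEStronglyMeasurable b μ :=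
    (stronglyMeasurable_condExp.mono (hF i)).aestronglyMeasurable
  have hcmeas : AEStronglyMeasurable c μ :=
    (stronglyMeasurable_condExp.mono (hF (i - 1))).aestronglyMeasurable
  have habdd : ∀ᵐ ω ∂μ, |a ω| ≤ M := hbdd i hi
  have hbbdd : ∀ᵐ ω ∂μ, |b ω| ≤ M := hYbdd (i + 1) (F i) (by omega)
  have hcbdd : ∀ᵐ ω ∂μ, |c ω| ≤ M := hYbdd i (F (i - 1)) hi
  have hab : Integrable (fun ω => a ω * b ω) μ := hmulint a b hameas hbmeas habdd hbbdd
  have hac : Integrable (fun ω => a ω * c ω) μ := hmulint a c hameas hcmeas habdd hcbdd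
  have hbc : Integrable (fun ω => b ω * c ω) μ := hmulint b c hbmeas hcmeas hbbdd hcbdd
  have ha2 : Integrable (fun ω => a ω ^ 2) μ := by
    simp_rw [pow_two]; exact hmulint a a hameas hameas habdd habdd
  have hb2 : Integrable (fun ω => b ω ^ 2) μ := by
    simp_rw [pow_two]; exact hmulint b b hbmeas hbmeas hbbdd hbbdd
  have hc2 : Integrable (fun ω => c ω ^ 2) μ := by
    simp_rw [pow_two]; exact hmulint c c hcmeas hcmeas hcbdd hcbdd
  -- expansion of the square
  have hexp : ∫ ω, (Z i ω) ^ 2 ∂μ =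
      ∫ ω, a ω ^ 2 ∂μ + ∫ ω, b ω ^ 2 ∂μ + ∫ ω, c ω ^ 2 ∂μ
        + 2 * ∫ ω, a ω * b ω ∂μ - 2 * ∫ ω, a ω * c ω ∂μ - 2 * ∫ ω, b ω * c ω ∂μ := by
    have hpt : ∀ ω, (Z i ω) ^ 2 =
        a ω ^ 2 + b ω ^ 2 + c ω ^ 2 + 2 * (a ω * b ω) - 2 * (a ω * c ω)
          - 2 * (b ω * c ω) := by
      intro ω; rw [hZ i ω]; ring
    calc ∫ ω, (Z i ω) ^ 2 ∂μ
        = ∫ ω, (a ω ^ 2 + b ω ^ 2 + c ω ^ 2 + 2 * (a ω * b ω) - 2 * (a ω * c ω)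
            - 2 * (b ω * c ω)) ∂μ := by simp_rw [hpt]
      _ = _ := by
          have I1 : Integrable (fun ω => a ω ^ 2 + b ω ^ 2) μ := ha2.add hb2
          have I2 : Integrable (fun ω => a ω ^ 2 + b ω ^ 2 + c ω ^ 2) μ := I1.add hc2
          have I3 : Integrable (fun ω => a ω ^ 2 + b ω ^ 2 + c ω ^ 2 + 2 * (a ω * b ω)) μ :=
            I2.add (hab.const_mul 2)
          have I4 : Integrable (fun ω => a ω ^ 2 + b ω ^ 2 + c ω ^ 2 + 2 * (a ω * b ω)
              - 2 * (a ω * c ω)) μ := I3.sub (hac.const_mul 2)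
          rw [integral_sub I4 (hbc.const_mul 2), integral_sub I3 (hac.const_mul 2),
            integral_add I2 (hab.const_mul 2), integral_add I1 hc2, integral_add ha2 hb2,
            integral_const_mul, integral_const_mul, integral_const_mul]
  -- ∫ a*b = ∫ X i * X (i+1)
  have habX : ∫ ω, a ω * b ω ∂μ = ∫ ω, X i ω * X (i + 1) ω ∂μ := by
    have hXX : Integrable (X i * X (i + 1)) μ :=
      hmulint (X i) (X (i + 1)) hameas (hmeas (i + 1)).aestronglyMeasurable habdd
        (hbdd (i + 1) (by omega))
    have hpull := condExp_mul_of_stronglyMeasurable_left (m := F i) (μ := μ)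
      (hadapted i).stronglyMeasurable hXX (hXint (i + 1) (by omega))
    have h1 : ∫ ω, (μ[X i * X (i + 1)|F i]) ω ∂μ = ∫ ω, (X i * X (i + 1)) ω ∂μ :=
      integral_condExp (hF i)
    calc ∫ ω, a ω * b ω ∂μ = ∫ ω, (X i * μ[X (i + 1)|F i]) ω ∂μ := rfl
      _ = ∫ ω, (μ[X i * X (i + 1)|F i]) ω ∂μ := integral_congr_ae hpull.symm
      _ = ∫ ω, X i ω * X (i + 1) ω ∂μ := h1
  -- ∫ a*c = ∫ c^2
  have hacC : ∫ ω, a ω * c ω ∂μ = ∫ ω, c ω ^ 2 ∂μ := by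
    have hcX : Integrable (c * X i) μ := by
      have := hmulint c (X i) hcmeas hameas hcbdd habdd
      exact this
    have hpull := condExp_mul_of_stronglyMeasurable_left (m := F (i - 1)) (μ := μ)
      (stronglyMeasurable_condExp (f := X i)) hcX (hXint i hi)
    have h1 : ∫ ω, (μ[c * X i|F (i - 1)]) ω ∂μ = ∫ ω, (c * X i) ω ∂μ :=
      integral_condExp (hF (i - 1))
    calc ∫ ω, a ω * c ω ∂μ = ∫ ω, (c * X i) ω ∂μ := by
          simp only [Pi.mul_apply, mul_comm]; rfl
      _ = ∫ ω, (μ[c * X i|F (i - 1)]) ω ∂μ := h1.symm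
      _ = ∫ ω, (c * μ[X i|F (i - 1)]) ω ∂μ := integral_congr_ae hpull
      _ = ∫ ω, c ω ^ 2 ∂μ := by simp_rw [Pi.mul_apply, ← hc, pow_two]
  -- ∫ b*c = 0
  have hbcZ : ∫ ω, b ω * c ω ∂μ = 0 := by
    have hcX : Integrable (c * X (i + 1)) μ :=
      hmulint c (X (i + 1)) hcmeas (hmeas (i + 1)).aestronglyMeasurable hcbdd
        (hbdd (i + 1) (by omega))
    have hcFi : StronglyMeasurable[F i] c :=
      stronglyMeasurable_condExp.mono (hFmono (Nat.sub_le i 1))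
    have hpull := condExp_mul_of_stronglyMeasurable_left (m := F i) (μ := μ)
      hcFi hcX (hXint (i + 1) (by omega))
    have h1 : ∫ ω, (μ[c * X (i + 1)|F i]) ω ∂μ = ∫ ω, (c * X (i + 1)) ω ∂μ :=
      integral_condExp (hF i)
    have h2 : ∫ ω, c ω * X (i + 1) ω ∂μ = (∫ ω, c ω ∂μ) * ∫ ω, X (i + 1) ω ∂μ :=
      (hCEindep i hi).integral_fun_mul_eq_mul_integral integrable_condExp.aestronglyMeasurable
        (hXint (i + 1) (by omega)).aestronglyMeasurable
    calc ∫ ω, b ω * c ω ∂μ = ∫ ω, (c * μ[X (i + 1)|F i]) ω ∂μ := by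
          simp_rw [Pi.mul_apply, ← hb, mul_comm]
      _ = ∫ ω, (μ[c * X (i + 1)|F i]) ω ∂μ := integral_congr_ae hpull.symm
      _ = ∫ ω, (c * X (i + 1)) ω ∂μ := h1
      _ = (∫ ω, c ω ∂μ) * ∫ ω, X (i + 1) ω ∂μ := h2
      _ = 0 := by rw [hcent (i + 1) (by omega), mul_zero]
  -- stationarity of conditional expectations: ∫ b^2 = ∫ c^2
  have hWsq : ∀ j : ℕ, ∫ ω, ((μ[X (j + 1)|F j]) ω) ^ 2 ∂μ
      = ∫ ω, ((μ[X (0 + 1)|F 0]) ω) ^ 2 ∂μ := by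
    intro j
    have h := (hCEstat j).comp (u := fun g : ℕ → ℝ => (g 0) ^ 2)
      ((measurable_pi_apply 0).pow measurable_const)
    have := h.integral_eq
    simpa using this
  have hbceq : ∫ ω, b ω ^ 2 ∂μ = ∫ ω, c ω ^ 2 ∂μ := by
    have h1 : ∫ ω, b ω ^ 2 ∂μ = ∫ ω, ((μ[X (0 + 1)|F 0]) ω) ^ 2 ∂μ := hWsq i
    have h2 : ∫ ω, c ω ^ 2 ∂μ = ∫ ω, ((μ[X (0 + 1)|F 0]) ω) ^ 2 ∂μ := by
      have := hWsq (i - 1)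
      rwa [Nat.sub_add_cancel hi] at this
    rw [h1, h2]
  -- stationarity of X: ∫ a^2 = ∫ X₁², ∫ X i X(i+1) = ∫ X₁ X₂
  have hX2 : ∫ ω, a ω ^ 2 ∂μ = ∫ ω, (X 1 ω) ^ 2 ∂μ := by
    have h := (hstat (i - 1)).comp (u := fun g : ℕ → ℝ => (g 0) ^ 2)
      ((measurable_pi_apply 0).pow measurable_const)
    have h2 := h.integral_eq
    simp only [Function.comp_apply, zero_add] at h2
    rwa [Nat.sub_add_cancel hi] at h2
  have hX12 : ∫ ω, X i ω * X (i + 1) ω ∂μ = ∫ ω, X 1 ω * X 2 ω ∂μ := by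
    have h := (hstat (i - 1)).comp (u := fun g : ℕ → ℝ => g 0 * g 1)
      ((measurable_pi_apply 0).mul (measurable_pi_apply 1))
    have h2 := h.integral_eq
    simp only [Function.comp_apply, zero_add] at h2
    rw [Nat.sub_add_cancel hi] at h2
    have hidx : 1 + (i - 1) + 1 = i + 1 := by omega
    rw [hidx] at h2
    exact h2
  rw [hexp, hbceq, hacC, habX, hX2, hX12, hbcZ]
  ring
end

section
/- Let (T_i)_{i≥0} be i.i.d. positive random variables with ‖T_i‖_{ψ_1} ≤ d, let μ := E[T_0], and for n ∈ ℕ define N := inf{k ≥ 0 : T_0 + ⋯ + T_k ≥ n} (hitting count of the random walk). Then for every p > 0, P(N > ⌈(1+p)n/μ⌉) ≤ e·exp(−pnμ / (K_p d²)), where K_p := L_p + 16/L_p and L_p := 16((1+p)/p + 1/4). -/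
open MeasureTheory ProbabilityTheory
open scoped ENNReal

set_option maxHeartbeats 1000000

lemma exp_neg_le_quad {y : ℝ} (hy : 0 ≤ y) : Real.exp (-y) ≤ 1 - y + y ^ 2 / 2 := by
  have h := Real.quadratic_le_exp_of_nonneg hy
  have hpos : 0 < Real.exp y := Real.exp_pos y
  have hq : 0 < 1 - y + y ^ 2 / 2 := by nlinarith
  have key : 1 ≤ (1 - y + y ^ 2 / 2) * Real.exp y := by nlinarith [sq_nonneg (y ^ 2)]
  rw [Real.exp_neg, inv_eq_one_div, div_le_iff₀ hpos]
  nlinarith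

lemma scalar_ineq (p μ d L K n mR : ℝ) (hp : 0 < p) (hμ : 0 < μ) (hd : 0 < d)
    (hn : 0 ≤ n)
    (hL : L = 16 * ((1 + p) / p + 1 / 4)) (hK : K = L + 16 / L)
    (hm1 : (1 + p) * n / μ ≤ mR) (hm2 : mR ≤ (1 + p) * n / μ + 1) :
    2 * μ / (L * d ^ 2) * n +
      (mR + 1) * (-(2 * μ / (L * d ^ 2)) * μ + 2 * (2 * μ / (L * d ^ 2)) ^ 2 * d ^ 2)
      ≤ 1 - p * n * μ / (K * d ^ 2) := by
  have hpL : p * L = 16 * (1 + p) + 4 * p := by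
    rw [hL]; field_simp; ring
  have hL20 : 20 < L := by nlinarith
  have hKL : L ≤ K := by
    rw [hK]; have : 0 ≤ 16 / L := by positivity
    linarith
  have hK0 : 0 < K := by linarith
  have hd2 : (0:ℝ) < d ^ 2 := by positivity
  have hu1 : (1 + p) * n ≤ mR * μ := by
    rw [div_le_iff₀ hμ] at hm1; linarith
  -- rewrite LHS as a single fraction
  have hrw : 2 * μ / (L * d ^ 2) * n +
      (mR + 1) * (-(2 * μ / (L * d ^ 2)) * μ + 2 * (2 * μ / (L * d ^ 2)) ^ 2 * d ^ 2)
      = (2 * μ * (n - mR * μ - μ) * L + 8 * μ * (mR * μ + μ)) / (L ^ 2 * d ^ 2) := by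
    field_simp
    ring
  rw [hrw]
  have hpLn : μ * n * (p * L) = μ * n * (16 * (1 + p) + 4 * p) := by rw [hpL]
  have hnum : K * (2 * μ * (n - mR * μ - μ) * L + 8 * μ * (mR * μ + μ)) ≤
      -(p * n * μ * L ^ 2) := by
    have hx : 0 ≤ (mR * μ - (1 + p) * n) * (μ * (2 * L - 8)) :=
      mul_nonneg (sub_nonneg.mpr hu1) (mul_pos hμ (by linarith : (0:ℝ) < 2 * L - 8)).le
    have h1 : 2 * μ * (n - mR * μ - μ) * L + 8 * μ * (mR * μ + μ)
        ≤ -(μ * n * (24 + 32 * p)) - μ ^ 2 * (2 * L - 8) := by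
      nlinarith [hx, hpLn]
    have h2 : 0 ≤ μ * n * (24 + 32 * p) := by positivity
    have h3 : 0 ≤ μ ^ 2 * (2 * L - 8) := by nlinarith [sq_nonneg μ]
    have hA := mul_le_mul_of_nonneg_left h1 hK0.le
    have hKB : 0 ≤ K * (μ ^ 2 * (2 * L - 8)) := mul_nonneg hK0.le h3
    have hKLA : L * (μ * n * (24 + 32 * p)) ≤ K * (μ * n * (24 + 32 * p)) :=
      mul_le_mul_of_nonneg_right hKL h2
    have heq : p * n * μ * L ^ 2 = (16 * (1 + p) + 4 * p) * (n * μ * L) := by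
      linear_combination (n * μ * L) * hpL
    have h8 : 0 ≤ n * μ * L * (8 + 12 * p) :=
      mul_nonneg (mul_nonneg (mul_nonneg hn hμ.le) (by linarith : (0:ℝ) ≤ L)) (by linarith)
    have hlast : p * n * μ * L ^ 2 ≤ L * (μ * n * (24 + 32 * p)) := by
      rw [heq]; linarith [h8]
    linarith [hA, hKB, hKLA, hlast]
  have step : (2 * μ * (n - mR * μ - μ) * L + 8 * μ * (mR * μ + μ)) / (L ^ 2 * d ^ 2)
      ≤ - (p * n * μ / (K * d ^ 2)) := by
    rw [div_le_iff₀ (by positivity : (0:ℝ) < L ^ 2 * d ^ 2)]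
    have hre : -(p * n * μ / (K * d ^ 2)) * (L ^ 2 * d ^ 2) = (-(p * n * μ * L ^ 2)) / K := by
      field_simp
    rw [hre, le_div_iff₀ hK0]
    calc (2 * μ * (n - mR * μ - μ) * L + 8 * μ * (mR * μ + μ)) * K
        = K * (2 * μ * (n - mR * μ - μ) * L + 8 * μ * (mR * μ + μ)) := by ring
      _ ≤ -(p * n * μ * L ^ 2) := hnum
  linarith

theorem renewal_count_tail_bound
    {Ω : Type*} [MeasurableSpace Ω] (P : Measure Ω) [IsProbabilityMeasure P]
    (T : ℕ → Ω → ℝ) (hmeas : ∀ i, Measurable (T i))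
    (hindep : iIndepFun T P)
    (hident : ∀ i, IdentDistrib (T i) (T 0) P P)
    (hpos : ∀ i, ∀ᵐ ω ∂P, 0 < T i ω)
    (d : ℝ) (hd : 0 < d)
    (hpsi : ∀ i, ∫⁻ ω, ENNReal.ofReal (Real.exp (|T i ω| / d)) ∂P ≤ 2)
    (μ : ℝ) (hμ : μ = ∫ ω, T 0 ω ∂P)
    (n : ℕ)
    (N : Ω → ℕ)
    (hN : ∀ ω, N ω = sInf {k : ℕ | (n : ℝ) ≤ ∑ i ∈ Finset.range (k + 1), T i ω})
    (p : ℝ) (hp : 0 < p)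
    (L K : ℝ) (hL : L = 16 * ((1 + p) / p + 1 / 4)) (hK : K = L + 16 / L) :
    P {ω | (⌈(1 + p) * n / μ⌉₊ : ℕ) < N ω} ≤
      ENNReal.ofReal (Real.exp 1 * Real.exp (-(p * n * μ) / (K * d ^ 2))) := by
  set m : ℕ := ⌈(1 + p) * n / μ⌉₊ with hm
  -- integrability of the exponential weight
  have hg_meas : ∀ i, Measurable fun ω => Real.exp (|T i ω| / d) :=
    fun i => ((hmeas i).abs.div_const d).exp
  have hg_int : ∀ i, Integrable (fun ω => Real.exp (|T i ω| / d)) P := by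
    intro i
    refine ⟨(hg_meas i).aestronglyMeasurable, ?_⟩
    rw [hasFiniteIntegral_iff_ofReal (Filter.Eventually.of_forall fun ω => (Real.exp_pos _).le)]
    exact lt_of_le_of_lt (hpsi i) (by norm_num)
  have hg_le : ∀ i, ∫ ω, Real.exp (|T i ω| / d) ∂P ≤ 2 := by
    intro i
    rw [integral_eq_lintegral_of_nonneg_ae
      (Filter.Eventually.of_forall fun ω => (Real.exp_pos _).le) (hg_meas i).aestronglyMeasurable]
    calc (∫⁻ ω, ENNReal.ofReal (Real.exp (|T i ω| / d)) ∂P).toReal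
        ≤ (2 : ℝ≥0∞).toReal := ENNReal.toReal_mono (by norm_num) (hpsi i)
      _ = 2 := by norm_num
  have habs : ∀ i ω, |T i ω| ≤ d * Real.exp (|T i ω| / d) := by
    intro i ω
    have h := Real.add_one_le_exp (|T i ω| / d)
    have h2 : |T i ω| / d ≤ Real.exp (|T i ω| / d) := by linarith
    calc |T i ω| = d * (|T i ω| / d) := by field_simp
      _ ≤ d * Real.exp (|T i ω| / d) := mul_le_mul_of_nonneg_left h2 hd.le
  have hT_int : ∀ i, Integrable (T i) P := by
    intro i
    refine Integrable.mono' ((hg_int i).const_mul d) (hmeas i).aestronglyMeasurable ?_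
    exact Filter.Eventually.of_forall fun ω => by
      simpa [Real.norm_eq_abs] using habs i ω
  have hsq : ∀ i ω, (T i ω) ^ 2 ≤ 2 * d ^ 2 * Real.exp (|T i ω| / d) := by
    intro i ω
    have h := Real.pow_div_factorial_le_exp (x := |T i ω| / d) (by positivity) 2
    have h1 : (|T i ω| / d) ^ 2 / 2 ≤ Real.exp (|T i ω| / d) := by
      simpa [Nat.factorial] using h
    have h2 : (T i ω) ^ 2 = ((|T i ω| / d) ^ 2 / 2) * (2 * d ^ 2) := by
      rw [div_pow, sq_abs]
      field_simp
    rw [h2]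
    calc ((|T i ω| / d) ^ 2 / 2) * (2 * d ^ 2)
        ≤ Real.exp (|T i ω| / d) * (2 * d ^ 2) :=
          mul_le_mul_of_nonneg_right h1 (by positivity)
      _ = 2 * d ^ 2 * Real.exp (|T i ω| / d) := by ring
  have hT2_int : ∀ i, Integrable (fun ω => (T i ω) ^ 2) P := by
    intro i
    refine Integrable.mono' ((hg_int i).const_mul (2 * d ^ 2))
      ((hmeas i).pow_const 2).aestronglyMeasurable ?_
    exact Filter.Eventually.of_forall fun ω => by
      rw [Real.norm_eq_abs, abs_of_nonneg (sq_nonneg _)]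
      exact hsq i ω
  have hT2 : ∀ i, ∫ ω, (T i ω) ^ 2 ∂P ≤ 4 * d ^ 2 := by
    intro i
    calc ∫ ω, (T i ω) ^ 2 ∂P ≤ ∫ ω, 2 * d ^ 2 * Real.exp (|T i ω| / d) ∂P :=
          integral_mono (hT2_int i) ((hg_int i).const_mul _) fun ω => hsq i ω
      _ = 2 * d ^ 2 * ∫ ω, Real.exp (|T i ω| / d) ∂P := integral_const_mul _ _
      _ ≤ 2 * d ^ 2 * 2 := mul_le_mul_of_nonneg_left (hg_le i) (by positivity)
      _ = 4 * d ^ 2 := by ring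
  have hTi_eq : ∀ i, ∫ ω, T i ω ∂P = μ := fun i => by
    rw [(hident i).integral_eq, hμ]
  -- μ is positive
  have hone : (1 : ℝ≥0∞) ≤ P {ω | 0 < T 0 ω} := by
    have h0 : P {ω | ¬ 0 < T 0 ω} = 0 := ae_iff.mp (hpos 0)
    have huniv : (Set.univ : Set Ω) = {ω | 0 < T 0 ω} ∪ {ω | 0 < T 0 ω}ᶜ :=
      (Set.union_compl_self _).symm
    calc (1 : ℝ≥0∞) = P Set.univ := measure_univ.symm
      _ ≤ P {ω | 0 < T 0 ω} + P {ω | 0 < T 0 ω}ᶜ := by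
          rw [huniv]; exact measure_union_le _ _
      _ = P {ω | 0 < T 0 ω} := by
          rw [Set.compl_setOf, h0, add_zero]
  have hμpos : 0 < μ := by
    rw [hμ, integral_pos_iff_support_of_nonneg_ae ((hpos 0).mono fun ω h => h.le) (hT_int 0)]
    refine lt_of_lt_of_le ?_ (measure_mono (fun ω (h : 0 < T 0 ω) => ne_of_gt h))
    exact lt_of_lt_of_le (by norm_num) hone
  -- μ ≤ d
  have hμd : μ ≤ d := by
    have hint1 : Integrable (fun ω => |T 0 ω| / d + 1) P :=
      ((hT_int 0).abs.div_const d).add (integrable_const 1)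
    have h2 : ∫ ω, (|T 0 ω| / d + 1) ∂P ≤ 2 :=
      le_trans (integral_mono hint1 (hg_int 0) fun ω => Real.add_one_le_exp _) (hg_le 0)
    have h3 : ∫ ω, (|T 0 ω| / d + 1) ∂P = (∫ ω, |T 0 ω| ∂P) / d + 1 := by
      rw [integral_add ((hT_int 0).abs.div_const d) (integrable_const 1), integral_div,
        integral_const]
      simp
    have h4 : (∫ ω, |T 0 ω| ∂P) / d ≤ 1 := by rw [h3] at h2; linarith
    have h5 : ∫ ω, |T 0 ω| ∂P ≤ d := (div_le_one hd).mp h4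
    have h6 : μ ≤ ∫ ω, |T 0 ω| ∂P := by
      rw [← hTi_eq 0]
      exact integral_mono (hT_int 0) (hT_int 0).abs fun ω => le_abs_self _
    linarith
  have hLpos : 0 < L := by
    have : 0 < (1 + p) / p := div_pos (by linarith) hp
    rw [hL]; linarith
  set l : ℝ := 2 * μ / (L * d ^ 2) with hl
  have hl0 : 0 < l := div_pos (by linarith) (mul_pos hLpos (by positivity))
  -- mgf bound for each summand
  have hmgf : ∀ i, mgf (T i) P (-l) ≤ Real.exp (-(l * μ) + 2 * l ^ 2 * d ^ 2) := by
    intro i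
    have hptw : ∀ᵐ ω ∂P,
        Real.exp (-l * T i ω) ≤ 1 - l * T i ω + l ^ 2 / 2 * (T i ω) ^ 2 := by
      refine (hpos i).mono fun ω hω => ?_
      have h := exp_neg_le_quad (y := l * T i ω) (mul_nonneg hl0.le hω.le)
      have h2 : (l * T i ω) ^ 2 / 2 = l ^ 2 / 2 * (T i ω) ^ 2 := by ring
      rw [neg_mul] at *
      linarith
    have hrhs_int : Integrable (fun ω => 1 - l * T i ω + l ^ 2 / 2 * (T i ω) ^ 2) P :=
      ((integrable_const 1).sub ((hT_int i).const_mul l)).add ((hT2_int i).const_mul (l ^ 2 / 2))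
    have hlhs_int : Integrable (fun ω => Real.exp (-l * T i ω)) P := by
      refine Integrable.mono' (integrable_const 1)
        (((hmeas i).const_mul (-l)).exp).aestronglyMeasurable ?_
      refine (hpos i).mono fun ω hω => ?_
      rw [Real.norm_eq_abs, abs_of_pos (Real.exp_pos _)]
      exact Real.exp_le_one_iff.mpr (by nlinarith)
    have hmgf_eq : mgf (T i) P (-l) = ∫ ω, Real.exp (-l * T i ω) ∂P := rfl
    have hIle : ∫ ω, Real.exp (-l * T i ω) ∂P
        ≤ ∫ ω, (1 - l * T i ω + l ^ 2 / 2 * (T i ω) ^ 2) ∂P :=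
      integral_mono_ae hlhs_int hrhs_int hptw
    have hf1 : Integrable (fun ω => 1 - l * T i ω) P :=
      (integrable_const 1).sub ((hT_int i).const_mul l)
    have hc2 : Integrable (fun ω => l ^ 2 / 2 * (T i ω) ^ 2) P :=
      (hT2_int i).const_mul (l ^ 2 / 2)
    have hIeq : ∫ ω, (1 - l * T i ω + l ^ 2 / 2 * (T i ω) ^ 2) ∂P
        = 1 - l * μ + l ^ 2 / 2 * ∫ ω, (T i ω) ^ 2 ∂P := by
      have e1 : ∫ ω, (1 - l * T i ω + l ^ 2 / 2 * (T i ω) ^ 2) ∂P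
          = (∫ ω, (1 - l * T i ω) ∂P) + ∫ ω, l ^ 2 / 2 * (T i ω) ^ 2 ∂P :=
        integral_add hf1 hc2
      have e2 : ∫ ω, (1 - l * T i ω) ∂P
          = (∫ _ω, (1 : ℝ) ∂P) - ∫ ω, l * T i ω ∂P :=
        integral_sub (integrable_const 1) ((hT_int i).const_mul l)
      rw [e1, e2, integral_const, integral_const_mul, integral_const_mul, hTi_eq i]
      simp
    have hquad : l ^ 2 / 2 * ∫ ω, (T i ω) ^ 2 ∂P ≤ 2 * l ^ 2 * d ^ 2 := by
      calc l ^ 2 / 2 * ∫ ω, (T i ω) ^ 2 ∂P ≤ l ^ 2 / 2 * (4 * d ^ 2) :=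
            mul_le_mul_of_nonneg_left (hT2 i) (by positivity)
        _ = 2 * l ^ 2 * d ^ 2 := by ring
    have hfin := Real.add_one_le_exp (-(l * μ) + 2 * l ^ 2 * d ^ 2)
    rw [hmgf_eq]
    linarith [hIle, hIeq.le, hIeq.ge]
  -- the partial sum
  set X : Ω → ℝ := fun ω => ∑ i ∈ Finset.range (m + 1), T i ω with hXdef
  have hXeq : X = ∑ i ∈ Finset.range (m + 1), T i := by
    funext ω; simp [hXdef]
  have hXmeas : Measurable X := Finset.measurable_sum _ fun i _ => hmeas i
  have hXint : Integrable (fun ω => Real.exp (-l * X ω)) P := by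
    refine Integrable.mono' (integrable_const 1)
      ((hXmeas.const_mul (-l)).exp).aestronglyMeasurable ?_
    have hall : ∀ᵐ ω ∂P, ∀ i, 0 < T i ω := ae_all_iff.mpr hpos
    refine hall.mono fun ω hω => ?_
    rw [Real.norm_eq_abs, abs_of_pos (Real.exp_pos _)]
    refine Real.exp_le_one_iff.mpr ?_
    have hX0 : 0 ≤ X ω := Finset.sum_nonneg fun i _ => (hω i).le
    nlinarith
  have hchern := measure_le_le_exp_mul_mgf (μ := P) (X := X) (n : ℝ)
    (neg_nonpos.mpr hl0.le) hXint
  have hmgfX : mgf X P (-l) = ∏ i ∈ Finset.range (m + 1), mgf (T i) P (-l) := by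
    rw [hXeq]
    exact hindep.mgf_sum hmeas (Finset.range (m + 1))
  have hprod : ∏ i ∈ Finset.range (m + 1), mgf (T i) P (-l)
      ≤ (Real.exp (-(l * μ) + 2 * l ^ 2 * d ^ 2)) ^ (m + 1) := by
    calc ∏ i ∈ Finset.range (m + 1), mgf (T i) P (-l)
        ≤ ∏ _i ∈ Finset.range (m + 1), Real.exp (-(l * μ) + 2 * l ^ 2 * d ^ 2) :=
          Finset.prod_le_prod (fun i _ => mgf_nonneg) fun i _ => hmgf i
      _ = (Real.exp (-(l * μ) + 2 * l ^ 2 * d ^ 2)) ^ (m + 1) := by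
          rw [Finset.prod_const, Finset.card_range]
  have hEbound : l * (n : ℝ) + ((m : ℝ) + 1) * (-(l * μ) + 2 * l ^ 2 * d ^ 2)
      ≤ 1 - p * (n : ℝ) * μ / (K * d ^ 2) := by
    have hm1 : (1 + p) * (n : ℝ) / μ ≤ (m : ℝ) := Nat.le_ceil _
    have hm2 : (m : ℝ) ≤ (1 + p) * (n : ℝ) / μ + 1 :=
      (Nat.ceil_lt_add_one (div_nonneg (by positivity) hμpos.le)).le
    have := scalar_ineq p μ d L K (n : ℝ) (m : ℝ) hp hμpos hd (Nat.cast_nonneg n)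
      hL hK hm1 hm2
    calc l * (n : ℝ) + ((m : ℝ) + 1) * (-(l * μ) + 2 * l ^ 2 * d ^ 2)
        = 2 * μ / (L * d ^ 2) * (n : ℝ) + ((m : ℝ) + 1) *
          (-(2 * μ / (L * d ^ 2)) * μ + 2 * (2 * μ / (L * d ^ 2)) ^ 2 * d ^ 2) := by
          rw [hl]; ring
      _ ≤ 1 - p * (n : ℝ) * μ / (K * d ^ 2) := this
  have hfinal : (P {ω | X ω ≤ (n : ℝ)}).toReal
      ≤ Real.exp 1 * Real.exp (-(p * (n : ℝ) * μ) / (K * d ^ 2)) := by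
    calc (P {ω | X ω ≤ (n : ℝ)}).toReal
        ≤ Real.exp (-(-l) * (n : ℝ)) * mgf X P (-l) := hchern
      _ = Real.exp (l * (n : ℝ)) * ∏ i ∈ Finset.range (m + 1), mgf (T i) P (-l) := by
          rw [hmgfX, neg_neg]
      _ ≤ Real.exp (l * (n : ℝ)) * (Real.exp (-(l * μ) + 2 * l ^ 2 * d ^ 2)) ^ (m + 1) :=
          mul_le_mul_of_nonneg_left hprod (Real.exp_pos _).le
      _ = Real.exp (l * (n : ℝ) + ((m : ℝ) + 1) * (-(l * μ) + 2 * l ^ 2 * d ^ 2)) := by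
          rw [← Real.exp_nat_mul, ← Real.exp_add]
          push_cast
          ring_nf
      _ ≤ Real.exp (1 + -(p * (n : ℝ) * μ) / (K * d ^ 2)) := by
          refine Real.exp_le_exp.mpr ?_
          rw [neg_div]
          linarith [hEbound]
      _ = Real.exp 1 * Real.exp (-(p * (n : ℝ) * μ) / (K * d ^ 2)) := Real.exp_add _ _
  have hsub : {ω | m < N ω} ⊆ {ω | X ω ≤ (n : ℝ)} := by
    intro ω hω
    simp only [Set.mem_setOf_eq] at hω ⊢
    by_contra hc
    push_neg at hc
    have hmem : m ∈ {k : ℕ | (n : ℝ) ≤ ∑ i ∈ Finset.range (k + 1), T i ω} := hc.le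
    have hle : N ω ≤ m := by rw [hN ω]; exact Nat.sInf_le hmem
    omega
  calc P {ω | m < N ω} ≤ P {ω | X ω ≤ (n : ℝ)} := measure_mono hsub
    _ = ENNReal.ofReal ((P {ω | X ω ≤ (n : ℝ)}).toReal) :=
        (ENNReal.ofReal_toReal (measure_ne_top _ _)).symm
    _ ≤ ENNReal.ofReal (Real.exp 1 * Real.exp (-(p * n * μ) / (K * d ^ 2))) :=
        ENNReal.ofReal_le_ofReal hfinal
end

section
/- Let (T_i)_{i≥0} be i.i.d. positive integer-valued random variables with ‖T_i‖_{ψ_1} ≤ d, μ := E[T_0], and N := inf{k ≥ 0 : T_0 + ⋯ + T_k ≥ n}. Fix p > 0 and set a := (1+p)n/μ and b := 2d²K_p/μ², where K_p := (16/p + 20) + 16/(16/p + 20). Then ‖(N − a)_+‖_{ψ_1} ≤ 2b = 4K_p d²/μ². -/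
open MeasureTheory ProbabilityTheory
open scoped ENNReal NNReal

lemma aux_le_exp (x : ℝ) : x ≤ Real.exp x :=
  le_trans (by linarith) (Real.add_one_le_exp x)

lemma aux_exp_neg_le_inv {x : ℝ} (hx : 0 ≤ x) : Real.exp (-x) ≤ (1 + x)⁻¹ := by
  rw [Real.exp_neg]
  exact inv_anti₀ (by linarith) (by linarith [Real.add_one_le_exp x])

lemma aux_exp_neg_le {x : ℝ} (hx : 0 ≤ x) : Real.exp (-x) ≤ 1 - x + x ^ 2 := by
  have h := aux_exp_neg_le_inv hx
  have h1 : (0:ℝ) < 1 + x := by linarith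
  have hy : (1 + x)⁻¹ * (1 + x) = 1 := inv_mul_cancel₀ h1.ne'
  nlinarith [hy, pow_nonneg hx 3, h1, Real.exp_pos (-x)]

lemma aux_sq_le {x : ℝ} (hx : 0 ≤ x) : x ^ 2 ≤ 2 * Real.exp x := by
  have h := Real.sum_le_exp_of_nonneg hx 3
  simp [Finset.sum_range_succ] at h
  nlinarith [h]

lemma aux_exp_sub_exp {u v : ℝ} (h : v ≤ u) :
    Real.exp u - Real.exp v ≤ (u - v) * Real.exp u := by
  have h1 : Real.exp v = Real.exp u * Real.exp (v - u) := by
    rw [← Real.exp_add]; ring_nf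
  have h2 : 1 - (u - v) ≤ Real.exp (v - u) := by
    have := Real.add_one_le_exp (v - u); linarith
  nlinarith [Real.exp_pos u]

lemma aux_geom {r : ℝ} (h0 : 0 ≤ r) (h1 : r < 1) (M : ℕ) :
    ∑ i ∈ Finset.range M, r ^ i ≤ (1 - r)⁻¹ :=
  (Summable.sum_le_tsum _ (fun i _ => pow_nonneg h0 i)
    (summable_geometric_of_lt_one h0 h1)).trans_eq (tsum_geometric_of_lt_one h0 h1)

lemma aux_integrable_of_lintegral {Ω : Type*} [MeasurableSpace Ω] {P : Measure Ω}
    {f : Ω → ℝ} (hm : Measurable f) (h0 : ∀ ω, 0 ≤ f ω)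
    (h2 : ∫⁻ ω, ENNReal.ofReal (f ω) ∂P ≤ 2) : Integrable f P := by
  refine ⟨hm.aestronglyMeasurable, ?_⟩
  have he : ∀ ω, ‖f ω‖ₑ = ENNReal.ofReal (f ω) := fun ω =>
    Real.enorm_eq_ofReal (h0 ω)
  rw [HasFiniteIntegral]
  simp only [he]
  exact lt_of_le_of_lt h2 (by norm_num)

lemma aux_integral_le_of_lintegral {Ω : Type*} [MeasurableSpace Ω] {P : Measure Ω}
    {f : Ω → ℝ} (hi : Integrable f P) (h0 : ∀ ω, 0 ≤ f ω)
    (h2 : ∫⁻ ω, ENNReal.ofReal (f ω) ∂P ≤ 2) : ∫ ω, f ω ∂P ≤ 2 := by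
  have heq := MeasureTheory.ofReal_integral_eq_lintegral_ofReal hi (ae_of_all _ h0)
  have h' : ENNReal.ofReal (∫ ω, f ω ∂P) ≤ ENNReal.ofReal 2 := by
    rw [heq]
    convert h2 using 2
    norm_num
  exact (ENNReal.ofReal_le_ofReal_iff (by norm_num)).mp h'

lemma aux_integrable_of_bound {Ω : Type*} [MeasurableSpace Ω] {P : Measure Ω}
    [IsProbabilityMeasure P] {f : Ω → ℝ} (hm : AEStronglyMeasurable f P) (C : ℝ)
    (h : ∀ ω, ‖f ω‖ ≤ C) : Integrable f P :=
  Integrable.mono' (integrable_const C) hm (ae_of_all _ h)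

set_option maxHeartbeats 4000000 in
theorem renewal_count_psi_one_bound
    {Ω : Type*} [MeasurableSpace Ω] (P : Measure Ω) [IsProbabilityMeasure P]
    (T : ℕ → Ω → ℕ) (hmeas : ∀ i, Measurable (T i))
    (hindep : iIndepFun T P)
    (hident : ∀ i, IdentDistrib (T i) (T 0) P P)
    (hpos : ∀ i, ∀ᵐ ω ∂P, 0 < T i ω)
    (d : ℝ) (hd : 0 < d)
    (hpsi : ∀ i, ∫⁻ ω, ENNReal.ofReal (Real.exp ((T i ω : ℝ) / d)) ∂P ≤ 2)
    (μ : ℝ) (hμ : μ = ∫ ω, (T 0 ω : ℝ) ∂P)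
    (n : ℕ)
    (N : Ω → ℕ)
    (hN : ∀ ω, N ω = sInf {k : ℕ | (n : ℝ) ≤ ∑ i ∈ Finset.range (k + 1), (T i ω : ℝ)})
    (p : ℝ) (hp : 0 < p)
    (K : ℝ) (hK : K = (16 / p + 20) + 16 / (16 / p + 20))
    (a b : ℝ) (ha : a = (1 + p) * n / μ) (hb : b = 2 * d ^ 2 * K / μ ^ 2) :
    psiNorm P 1 (fun ω => max ((N ω : ℝ) - a) 0) ≤ 2 * b ∧
      2 * b = 4 * K * d ^ 2 / μ ^ 2 := by
  -- ## Elementary constants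
  have hq : (0:ℝ) < 16 / p + 20 := by positivity
  have hK20 : 20 ≤ K := by
    rw [hK]
    have h1 : 0 < 16 / (16 / p + 20) := by positivity
    have h2 : (0:ℝ) ≤ 16 / p := by positivity
    linarith
  have hK0 : 0 < K := by linarith
  have hKp : 16 ≤ K * p := by
    rw [hK]
    have h1 : 16 / p * p = 16 := div_mul_cancel₀ 16 hp.ne'
    have h2 : 0 < 16 / (16 / p + 20) := by positivity
    nlinarith [hp]
  -- ## Integrability facts
  have hTRmeas : ∀ i, Measurable fun ω => (T i ω : ℝ) := fun i =>
    (measurable_from_top (f := (Nat.cast : ℕ → ℝ))).comp (hmeas i)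
  have hexp_meas : ∀ i, Measurable fun ω => Real.exp ((T i ω : ℝ) / d) := fun i =>
    Real.measurable_exp.comp ((hTRmeas i).div_const d)
  have hexp_int : ∀ i, Integrable (fun ω => Real.exp ((T i ω : ℝ) / d)) P := fun i =>
    aux_integrable_of_lintegral (hexp_meas i) (fun ω => (Real.exp_pos _).le) (hpsi i)
  have hexp_le : ∀ i, ∫ ω, Real.exp ((T i ω : ℝ) / d) ∂P ≤ 2 := fun i =>
    aux_integral_le_of_lintegral (hexp_int i) (fun ω => (Real.exp_pos _).le) (hpsi i)
  have hT_int : ∀ i, Integrable (fun ω => (T i ω : ℝ)) P := by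
    intro i
    refine Integrable.mono' ((hexp_int i).const_mul d) (hTRmeas i).aestronglyMeasurable
      (ae_of_all _ fun ω => ?_)
    rw [Real.norm_eq_abs, abs_of_nonneg (by positivity)]
    have h := aux_le_exp ((T i ω : ℝ) / d)
    calc (T i ω : ℝ) = d * ((T i ω : ℝ) / d) := by field_simp
      _ ≤ d * Real.exp ((T i ω : ℝ) / d) := by nlinarith [hd]
  have hTsq_int : Integrable (fun ω => (T 0 ω : ℝ) ^ 2) P := by
    refine Integrable.mono' ((hexp_int 0).const_mul (2 * d ^ 2))
      ((hTRmeas 0).pow_const 2).aestronglyMeasurable (ae_of_all _ fun ω => ?_)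
    rw [Real.norm_eq_abs, abs_of_nonneg (by positivity)]
    have h := aux_sq_le (x := (T 0 ω : ℝ) / d) (by positivity)
    calc (T 0 ω : ℝ) ^ 2 = d ^ 2 * ((T 0 ω : ℝ) / d) ^ 2 := by field_simp
      _ ≤ d ^ 2 * (2 * Real.exp ((T 0 ω : ℝ) / d)) := by nlinarith [sq_nonneg d, hd]
      _ = 2 * d ^ 2 * Real.exp ((T 0 ω : ℝ) / d) := by ring
  have hTsq_le : ∫ ω, (T 0 ω : ℝ) ^ 2 ∂P ≤ 4 * d ^ 2 := by
    have h1 : ∫ ω, (T 0 ω : ℝ) ^ 2 ∂P ≤ ∫ ω, 2 * d ^ 2 * Real.exp ((T 0 ω : ℝ) / d) ∂P := by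
      refine integral_mono hTsq_int ((hexp_int 0).const_mul _) fun ω => ?_
      have h := aux_sq_le (x := (T 0 ω : ℝ) / d) (by positivity)
      calc (T 0 ω : ℝ) ^ 2 = d ^ 2 * ((T 0 ω : ℝ) / d) ^ 2 := by field_simp
        _ ≤ d ^ 2 * (2 * Real.exp ((T 0 ω : ℝ) / d)) := by nlinarith [sq_nonneg d, hd]
        _ = 2 * d ^ 2 * Real.exp ((T 0 ω : ℝ) / d) := by ring
    rw [integral_const_mul] at h1
    nlinarith [hexp_le 0, sq_nonneg d, hd, h1]
  have hμ1 : 1 ≤ μ := by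
    rw [hμ]
    have h1 : ∀ᵐ ω ∂P, (1:ℝ) ≤ (T 0 ω : ℝ) := (hpos 0).mono fun ω h => by exact_mod_cast h
    calc (1:ℝ) = ∫ _ω, (1:ℝ) ∂P := by simp
      _ ≤ ∫ ω, (T 0 ω : ℝ) ∂P := integral_mono_ae (integrable_const 1) (hT_int 0) h1
  have hμ0 : (0:ℝ) < μ := by linarith
  have hμd : μ * Real.exp 1 ≤ 2 * d := by
    have key : ∀ ω, (T 0 ω : ℝ) ≤ d / Real.exp 1 * Real.exp ((T 0 ω : ℝ) / d) := by
      intro ω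
      have h2 : (T 0 ω : ℝ) / d ≤ Real.exp ((T 0 ω : ℝ) / d - 1) := by
        linarith [Real.add_one_le_exp ((T 0 ω : ℝ) / d - 1)]
      rw [Real.exp_sub] at h2
      have h3 := mul_le_mul_of_nonneg_left h2 hd.le
      calc (T 0 ω : ℝ) = d * ((T 0 ω : ℝ) / d) := by field_simp
        _ ≤ d * (Real.exp ((T 0 ω : ℝ) / d) / Real.exp 1) := h3
        _ = d / Real.exp 1 * Real.exp ((T 0 ω : ℝ) / d) := by ring
    have hde : (0:ℝ) < d / Real.exp 1 := by positivity
    have h4 : μ ≤ d / Real.exp 1 * 2 := by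
      rw [hμ]
      calc ∫ ω, (T 0 ω : ℝ) ∂P ≤ ∫ ω, d / Real.exp 1 * Real.exp ((T 0 ω : ℝ) / d) ∂P :=
            integral_mono (hT_int 0) ((hexp_int 0).const_mul _) key
        _ = d / Real.exp 1 * ∫ ω, Real.exp ((T 0 ω : ℝ) / d) ∂P := integral_const_mul _ _
        _ ≤ d / Real.exp 1 * 2 := by nlinarith [hexp_le 0]
    have he : (0:ℝ) < Real.exp 1 := Real.exp_pos 1
    have h5 : d / Real.exp 1 * Real.exp 1 = d := by field_simp
    nlinarith [h4, he]
  -- ## The key parameters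
  have hp1 : (0:ℝ) < 1 + p := by linarith
  obtain ⟨θ, hθ_def⟩ : ∃ θ : ℝ, θ = min (p / (1 + p)) (1 / 2) := ⟨_, rfl⟩
  have hθ0 : 0 < θ := hθ_def ▸ lt_min (by positivity) (by norm_num)
  have hθ_half : θ ≤ 1 / 2 := hθ_def ▸ min_le_right _ _
  have hθp : θ ≤ p / (1 + p) := hθ_def ▸ min_le_left _ _
  obtain ⟨l, hl_def⟩ : ∃ l : ℝ, l = θ * μ / (4 * d ^ 2) := ⟨_, rfl⟩
  have hl0 : 0 < l := by rw [hl_def]; positivity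
  obtain ⟨g, hg_def⟩ : ∃ g : ℝ, g = l * μ - 4 * l ^ 2 * d ^ 2 := ⟨_, rfl⟩
  have hg_eq : g = μ ^ 2 / (4 * d ^ 2) * (θ * (1 - θ)) := by
    rw [hg_def, hl_def]; field_simp
  have hg0 : 0 < g := by
    rw [hg_eq]
    have h1 : 0 < 1 - θ := by linarith
    positivity
  obtain ⟨c, hc_def⟩ : ∃ c : ℝ, c = 2 * b := ⟨_, rfl⟩
  have hc_val : c = 4 * K * d ^ 2 / μ ^ 2 := by rw [hc_def, hb]; ring
  have hc0 : 0 < c := by rw [hc_val]; positivity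
  have hKθ : 3 ≤ K * (θ * (1 - θ)) := by
    rcases le_or_gt p 1 with hple | hpgt
    · have hθ_eq : θ = p / (1 + p) := hθ_def.trans (min_eq_left (by
        rw [div_le_div_iff₀ hp1 (by norm_num)]; linarith))
      have h1θ : K * (θ * (1 - θ)) = K * p / (1 + p) ^ 2 := by
        rw [hθ_eq]; field_simp; ring
      rw [h1θ, le_div_iff₀ (by positivity)]
      have hps : p * p ≤ p := by nlinarith
      nlinarith [hKp, hps, hple, hp.le]
    · have hθ_eq : θ = 1 / 2 := hθ_def.trans (min_eq_right (by
        rw [div_le_div_iff₀ (by norm_num) hp1]; linarith))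
      rw [hθ_eq]; norm_num; linarith
  have hgc : 3 / c ≤ g := by
    rw [hc_val, hg_eq]
    have h1 : 3 / (4 * K * d ^ 2 / μ ^ 2) = 3 * μ ^ 2 / (4 * K * d ^ 2) := by
      field_simp
    rw [h1, div_le_iff₀ (by positivity)]
    have h2 : μ ^ 2 / (4 * d ^ 2) * (θ * (1 - θ)) * (4 * K * d ^ 2)
        = K * (θ * (1 - θ)) * μ ^ 2 := by field_simp
    rw [h2]
    nlinarith [hKθ, sq_nonneg μ, hμ0]
  have hc2 : 2 ≤ c := by
    have he1 : (2.7:ℝ) < Real.exp 1 := by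
      have h := Real.exp_one_gt_d9; norm_num at h ⊢; linarith
    have hd2 : μ ^ 2 * 2.7 ^ 2 ≤ 4 * d ^ 2 := by
      have hsq : μ * Real.exp 1 * (μ * Real.exp 1) ≤ 2 * d * (2 * d) :=
        mul_le_mul hμd hμd (by positivity) (by linarith)
      have h27 : (2.7:ℝ) * 2.7 ≤ Real.exp 1 * Real.exp 1 :=
        mul_le_mul he1.le he1.le (by norm_num) (Real.exp_pos 1).le
      nlinarith [hsq, mul_le_mul_of_nonneg_left h27 (sq_nonneg μ)]
    rw [hc_val, le_div_iff₀ (by positivity)]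
    nlinarith [hK20, hμ0, hd2, sq_nonneg μ, hK0]
  have ha0 : 0 ≤ a := by rw [ha]; positivity
  -- l * n ≤ a * g
  have hlng : l * μ ≤ (1 + p) * g := by
    have h1 : 1 ≤ (1 + p) * (1 - θ) := by
      have h2 : θ * (1 + p) ≤ p := (le_div_iff₀ hp1).mp hθp
      nlinarith [h2]
    have hA : (0:ℝ) ≤ μ ^ 2 / (4 * d ^ 2) := by positivity
    have hlμ : l * μ = μ ^ 2 / (4 * d ^ 2) * θ := by rw [hl_def]; field_simp
    rw [hlμ, hg_eq]
    nlinarith [mul_nonneg (mul_nonneg hA hθ0.le) (sub_nonneg.mpr h1)]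
  have hln : l * (n : ℝ) ≤ a * g := by
    have heq : a * g - l * n = (n : ℝ) * ((1 + p) * g - l * μ) / μ := by
      rw [ha]; field_simp
    have hnn : 0 ≤ (n : ℝ) * ((1 + p) * g - l * μ) / μ :=
      div_nonneg (mul_nonneg (Nat.cast_nonneg n) (by linarith)) hμ0.le
    rw [← heq] at hnn; linarith
  -- ## mgf bound
  have hint0 : ∀ (i : ℕ) (k : ℕ), Integrable
      (fun ω => Real.exp (-l * ∑ i ∈ Finset.range k, (T i ω : ℝ))) P := by
    intro i k
    refine aux_integrable_of_bound (Real.measurable_exp.comp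
      ((Finset.measurable_sum _ fun i _ => hTRmeas i).const_mul (-l))).aestronglyMeasurable
      1 fun ω => ?_
    rw [Real.norm_eq_abs, abs_of_pos (Real.exp_pos _), show (1:ℝ) = Real.exp 0 by simp]
    apply Real.exp_le_exp.mpr
    have h0 : (0:ℝ) ≤ ∑ i ∈ Finset.range k, (T i ω : ℝ) :=
      Finset.sum_nonneg fun i _ => Nat.cast_nonneg _
    nlinarith [hl0]
  have hexpT_int : ∀ i : ℕ, Integrable (fun ω => Real.exp (-l * (T i ω : ℝ))) P := by
    intro i
    refine aux_integrable_of_bound (Real.measurable_exp.comp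
      ((hTRmeas i).const_mul (-l))).aestronglyMeasurable 1 fun ω => ?_
    rw [Real.norm_eq_abs, abs_of_pos (Real.exp_pos _), show (1:ℝ) = Real.exp 0 by simp]
    apply Real.exp_le_exp.mpr
    have h0 : (0:ℝ) ≤ (T i ω : ℝ) := Nat.cast_nonneg _
    nlinarith [hl0]
  have hmgf : ∀ i, mgf (fun ω => (T i ω : ℝ)) P (-l) ≤ Real.exp (-g) := by
    have hmgf0 : mgf (fun ω => (T 0 ω : ℝ)) P (-l) ≤ Real.exp (-g) := by
      have hpt : ∀ ω, Real.exp (-l * (T 0 ω : ℝ))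
          ≤ 1 - l * (T 0 ω : ℝ) + l ^ 2 * (T 0 ω : ℝ) ^ 2 := by
        intro ω
        have h0 : 0 ≤ l * (T 0 ω : ℝ) := by positivity
        have h := aux_exp_neg_le h0
        have he : -l * (T 0 ω : ℝ) = -(l * (T 0 ω : ℝ)) := by ring
        rw [he]
        calc Real.exp (-(l * (T 0 ω : ℝ))) ≤ 1 - l * (T 0 ω : ℝ) + (l * (T 0 ω : ℝ)) ^ 2 := h
          _ = 1 - l * (T 0 ω : ℝ) + l ^ 2 * (T 0 ω : ℝ) ^ 2 := by ring
      have hrhs_int : Integrable (fun ω => 1 - l * (T 0 ω : ℝ) + l ^ 2 * (T 0 ω : ℝ) ^ 2) P :=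
        ((integrable_const 1).sub ((hT_int 0).const_mul l)).add (hTsq_int.const_mul (l ^ 2))
      have h1 : mgf (fun ω => (T 0 ω : ℝ)) P (-l)
          ≤ ∫ ω, (1 - l * (T 0 ω : ℝ) + l ^ 2 * (T 0 ω : ℝ) ^ 2) ∂P :=
        integral_mono (hexpT_int 0) hrhs_int hpt
      have h2 : ∫ ω, (1 - l * (T 0 ω : ℝ) + l ^ 2 * (T 0 ω : ℝ) ^ 2) ∂P
          = 1 - l * μ + l ^ 2 * ∫ ω, (T 0 ω : ℝ) ^ 2 ∂P := by
        have e1 : ∫ ω, (1 - l * (T 0 ω : ℝ) + l ^ 2 * (T 0 ω : ℝ) ^ 2) ∂P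
            = (∫ ω, (1 - l * (T 0 ω : ℝ)) ∂P) + ∫ ω, l ^ 2 * (T 0 ω : ℝ) ^ 2 ∂P :=
          integral_add ((integrable_const 1).sub ((hT_int 0).const_mul l))
            (hTsq_int.const_mul _)
        have e2 : ∫ ω, (1 - l * (T 0 ω : ℝ)) ∂P
            = (∫ _ω, (1:ℝ) ∂P) - ∫ ω, l * (T 0 ω : ℝ) ∂P :=
          integral_sub (integrable_const 1) ((hT_int 0).const_mul l)
        rw [e1, e2, integral_const_mul, integral_const_mul, integral_const, ← hμ]
        simp [measure_univ]
      have h3 : 1 - l * μ + l ^ 2 * ∫ ω, (T 0 ω : ℝ) ^ 2 ∂P ≤ 1 - g := by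
        rw [hg_def]; nlinarith [sq_nonneg l, hTsq_le, hl0]
      have h4 : 1 - g ≤ Real.exp (-g) := by linarith [Real.add_one_le_exp (-g)]
      calc mgf (fun ω => (T 0 ω : ℝ)) P (-l)
          ≤ ∫ ω, (1 - l * (T 0 ω : ℝ) + l ^ 2 * (T 0 ω : ℝ) ^ 2) ∂P := h1
        _ ≤ 1 - g := by rw [h2]; exact h3
        _ ≤ Real.exp (-g) := h4
    intro i
    have hid : IdentDistrib (fun ω => (T i ω : ℝ)) (fun ω => (T 0 ω : ℝ)) P P :=
      (hident i).comp (measurable_from_top (f := (Nat.cast : ℕ → ℝ)))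
    have hexp_id := hid.comp (u := fun x : ℝ => Real.exp (-l * x))
      (Real.measurable_exp.comp (measurable_id.const_mul (-l)))
    have heq : mgf (fun ω => (T i ω : ℝ)) P (-l) = mgf (fun ω => (T 0 ω : ℝ)) P (-l) :=
      hexp_id.integral_eq
    rw [heq]; exact hmgf0
  -- ## Measurability of N
  have hB : ∀ k : ℕ, MeasurableSet {ω | (n:ℝ) ≤ ∑ i ∈ Finset.range (k+1), (T i ω : ℝ)} :=
    fun k => measurableSet_le measurable_const (Finset.measurable_sum _ fun i _ => hTRmeas i)
  have hup : ∀ ω, ∀ k₁ k₂ : ℕ, k₁ ≤ k₂ →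
      k₁ ∈ {j : ℕ | (n:ℝ) ≤ ∑ i ∈ Finset.range (j+1), (T i ω : ℝ)} →
      k₂ ∈ {j : ℕ | (n:ℝ) ≤ ∑ i ∈ Finset.range (j+1), (T i ω : ℝ)} := by
    intro ω k₁ k₂ hle h₁
    simp only [Set.mem_setOf_eq] at h₁ ⊢
    refine h₁.trans (Finset.sum_le_sum_of_subset_of_nonneg
      (Finset.range_subset_range.mpr (by omega)) fun i _ _ => by positivity)
  have hNmeas : Measurable N := by
    apply measurable_to_countable'
    intro k
    match k with
    | 0 =>
      have hset : N ⁻¹' {0} = {ω | (n:ℝ) ≤ ∑ i ∈ Finset.range (0+1), (T i ω : ℝ)} ∪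
          (⋂ j : ℕ, {ω | (n:ℝ) ≤ ∑ i ∈ Finset.range (j+1), (T i ω : ℝ)}ᶜ) := by
        ext ω
        simp only [Set.mem_preimage, Set.mem_singleton_iff, Set.mem_union, Set.mem_iInter,
          Set.mem_compl_iff, Set.mem_setOf_eq]
        rw [hN ω, Nat.sInf_eq_zero]
        constructor
        · rintro (h0 | hemp)
          · exact Or.inl h0
          · refine Or.inr fun j => ?_
            intro hj
            have hj' : j ∈ {k : ℕ | (n : ℝ) ≤ ∑ i ∈ Finset.range (k + 1), (T i ω : ℝ)} := hj
            rw [hemp] at hj'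
            exact hj'
        · rintro (h0 | hall)
          · exact Or.inl h0
          · right
            ext j
            simp only [Set.mem_setOf_eq, Set.mem_empty_iff_false, iff_false]
            exact hall j
      rw [hset]
      exact (hB 0).union (MeasurableSet.iInter fun j => (hB j).compl)
    | (k' + 1) =>
      have hset : N ⁻¹' {k' + 1} = {ω | (n:ℝ) ≤ ∑ i ∈ Finset.range (k'+1+1), (T i ω : ℝ)} ∩
          {ω | (n:ℝ) ≤ ∑ i ∈ Finset.range (k'+1), (T i ω : ℝ)}ᶜ := by
        ext ω
        simp only [Set.mem_preimage, Set.mem_singleton_iff, Set.mem_inter_iff,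
          Set.mem_compl_iff, Set.mem_setOf_eq]
        rw [hN ω, Nat.sInf_upward_closed_eq_succ_iff (hup ω) k']
        exact Iff.rfl
      rw [hset]
      exact ((hB (k'+1)).inter (hB k').compl)
  -- ## Chernoff bound
  have hQ : ∀ k : ℕ, 1 ≤ k → a < (k : ℝ) →
      (P {ω | k ≤ N ω}).toReal ≤ Real.exp (-(((k : ℝ) - a) * g)) := by
    intro k hk1 hak
    have hsub : {ω | k ≤ N ω} ⊆ {ω | (∑ i ∈ Finset.range k, (T i ω : ℝ)) ≤ (n : ℝ)} := by
      intro ω hω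
      simp only [Set.mem_setOf_eq] at hω ⊢
      by_contra hcon
      push_neg at hcon
      have hmem : (k - 1) ∈ {j : ℕ | (n:ℝ) ≤ ∑ i ∈ Finset.range (j+1), (T i ω : ℝ)} := by
        simp only [Set.mem_setOf_eq]
        rw [Nat.sub_add_cancel hk1]
        exact hcon.le
      have hle := Nat.sInf_le hmem
      rw [← hN ω] at hle
      omega
    have hcher := measure_le_le_exp_mul_mgf (μ := P)
      (X := fun ω => ∑ i ∈ Finset.range k, (T i ω : ℝ)) (n : ℝ)
      (neg_nonpos.mpr hl0.le) (hint0 0 k)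
    have hmgfsum : mgf (fun ω => ∑ i ∈ Finset.range k, (T i ω : ℝ)) P (-l)
        ≤ Real.exp (-((k:ℝ) * g)) := by
      have hindep' : iIndepFun (fun i => fun ω => (T i ω : ℝ)) P :=
        hindep.comp (fun _ => (Nat.cast : ℕ → ℝ)) (fun _ => measurable_from_top)
      have hsum_eq : (fun ω => ∑ i ∈ Finset.range k, (T i ω : ℝ))
          = ∑ i ∈ Finset.range k, (fun ω => (T i ω : ℝ)) := by
        funext ω; simp only [Finset.sum_apply]
      rw [hsum_eq, hindep'.mgf_sum (fun i => hTRmeas i)]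
      calc ∏ i ∈ Finset.range k, mgf (fun ω => (T i ω : ℝ)) P (-l)
          ≤ ∏ _i ∈ Finset.range k, Real.exp (-g) :=
            Finset.prod_le_prod (fun i _ => mgf_nonneg) (fun i _ => hmgf i)
        _ = Real.exp (-g) ^ k := by rw [Finset.prod_const, Finset.card_range]
        _ = Real.exp (-((k:ℝ) * g)) := by
            rw [← Real.exp_nat_mul]; congr 1; ring
    calc (P {ω | k ≤ N ω}).toReal
        ≤ (P {ω | (∑ i ∈ Finset.range k, (T i ω : ℝ)) ≤ (n:ℝ)}).toReal :=
          ENNReal.toReal_mono (measure_ne_top P _) (measure_mono hsub)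
      _ ≤ Real.exp (-(-l) * n) * mgf (fun ω => ∑ i ∈ Finset.range k, (T i ω : ℝ)) P (-l) := hcher
      _ ≤ Real.exp (l * n) * Real.exp (-((k:ℝ) * g)) := by
          rw [neg_neg]
          exact mul_le_mul_of_nonneg_left hmgfsum (Real.exp_pos _).le
      _ = Real.exp (l * n + -((k:ℝ) * g)) := by rw [← Real.exp_add]
      _ ≤ Real.exp (-(((k:ℝ) - a) * g)) := Real.exp_le_exp.mpr (by
          calc l * n + -((k:ℝ) * g) ≤ a * g + -((k:ℝ) * g) := add_le_add_left hln _
            _ = -(((k:ℝ) - a) * g) := by ring)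
  -- ## Conclusion
  rw [show ((2:ℝ) * b) = c from hc_def.symm] at *
  refine ⟨?_, hc_val⟩
  have hmem : c ∈ psiSet P 1 (fun ω => max ((N ω : ℝ) - a) 0) := by
    refine ⟨hc0, ?_⟩
    have habs : ∀ ω : Ω, |max ((N ω : ℝ) - a) 0| = max ((N ω : ℝ) - a) 0 := fun ω =>
      abs_of_nonneg (le_max_right _ _)
    simp only [Real.rpow_one, habs]
    rcases Nat.eq_zero_or_pos n with hn0 | hn1
    · -- trivial case n = 0
      subst hn0
      have hNzero : ∀ ω, N ω = 0 := by
        intro ω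
        rw [hN ω]
        refine Nat.sInf_eq_zero.mpr (Or.inl ?_)
        simp only [Set.mem_setOf_eq, Nat.cast_zero]
        positivity
      have ha' : a = 0 := by rw [ha]; simp
      have hone : ∀ ω : Ω, Real.exp (max ((N ω : ℝ) - a) 0 / c) = 1 := by
        intro ω; rw [hNzero ω, ha']; norm_num
      simp only [hone]
      simp [lintegral_const, measure_univ]
    · -- main case n ≥ 1
      have hNlt : ∀ᵐ ω ∂P, N ω < n := by
        have hall : ∀ᵐ ω ∂P, ∀ i, 0 < T i ω := (MeasureTheory.ae_all_iff).mpr hpos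
        filter_upwards [hall] with ω hω
        have hmem : (n - 1) ∈ {j : ℕ | (n:ℝ) ≤ ∑ i ∈ Finset.range (j+1), (T i ω : ℝ)} := by
          simp only [Set.mem_setOf_eq]
          rw [Nat.sub_add_cancel hn1]
          calc (n:ℝ) = ∑ _i ∈ Finset.range n, (1:ℝ) := by simp
            _ ≤ ∑ i ∈ Finset.range n, (T i ω : ℝ) :=
              Finset.sum_le_sum fun i _ => by exact_mod_cast hω i
        have hle := Nat.sInf_le hmem
        rw [← hN ω] at hle
        omega
      have hNN : ∀ k : ℕ, MeasurableSet {ω | N ω = k} := fun k =>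
        hNmeas (measurableSet_singleton k)
      have hsum_m : ∀ (s : Finset ℕ) (V : Set Ω), (∀ k ∈ s, {ω | N ω = k} ⊆ V) →
          ∑ k ∈ s, (P {ω | N ω = k}).toReal ≤ (P V).toReal := by
        intro s V hsubV
        have hdisj : (↑s : Set ℕ).PairwiseDisjoint (fun k => {ω | N ω = k}) := by
          intro i _ j _ hij
          refine Set.disjoint_left.mpr fun ω h1 h2 => hij ?_
          simp only [Set.mem_setOf_eq] at h1 h2
          rw [← h1, ← h2]
        have h1 : ∑ k ∈ s, P {ω | N ω = k} = P (⋃ k ∈ s, {ω | N ω = k}) :=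
          (measure_biUnion_finset hdisj fun k _ => hNN k).symm
        have h2 : ∑ k ∈ s, (P {ω | N ω = k}).toReal = (∑ k ∈ s, P {ω | N ω = k}).toReal :=
          (ENNReal.toReal_sum fun k _ => measure_ne_top P _).symm
        rw [h2, h1]
        exact ENNReal.toReal_mono (measure_ne_top P _)
          (measure_mono (Set.iUnion₂_subset hsubV))
      obtain ⟨W, hW_def⟩ : ∃ W : ℕ → ℝ,
          W = fun k : ℕ => Real.exp (max ((k:ℝ) - a) 0 / c) := ⟨_, rfl⟩
      have hW : ∀ k : ℕ, W k = Real.exp (max ((k:ℝ) - a) 0 / c) := fun k => by rw [hW_def]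
      have hW0 : W 0 = 1 := by
        rw [hW 0]
        simp only [Nat.cast_zero]
        rw [max_eq_right (by linarith : (0:ℝ) - a ≤ 0)]
        simp
      have hWpos : ∀ k, 0 < W k := fun k => by rw [hW k]; exact Real.exp_pos _
      obtain ⟨m, hm_def⟩ : ∃ m : ℕ → ℝ, m = fun k => (P {ω | N ω = k}).toReal := ⟨_, rfl⟩
      have hm : ∀ k, m k = (P {ω | N ω = k}).toReal := fun k => by rw [hm_def]
      have hm0 : ∀ k, 0 ≤ m k := fun k => by rw [hm k]; exact ENNReal.toReal_nonneg
      have hind_int : ∀ k : ℕ,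
          Integrable (fun ω => ({ω' | N ω' = k}).indicator (fun _ => W k) ω) P :=
        fun k => (integrable_const (W k)).indicator (hNN k)
      have hgint : Integrable (fun ω => ∑ k ∈ Finset.range n,
          ({ω' | N ω' = k}).indicator (fun _ => W k) ω) P :=
        integrable_finset_sum _ fun k _ => hind_int k
      have hgnn : 0 ≤ᵐ[P] fun ω => ∑ k ∈ Finset.range n,
          ({ω' | N ω' = k}).indicator (fun _ => W k) ω :=
        ae_of_all _ fun ω => Finset.sum_nonneg fun k _ =>
          Set.indicator_nonneg (fun _ _ => (hWpos k).le) _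
      have hae : (fun ω => ENNReal.ofReal (Real.exp (max ((N ω : ℝ) - a) 0 / c)))
          =ᵐ[P] fun ω => ENNReal.ofReal (∑ k ∈ Finset.range n,
            ({ω' | N ω' = k}).indicator (fun _ => W k) ω) := by
        filter_upwards [hNlt] with ω hω
        congr 1
        rw [Finset.sum_eq_single_of_mem (N ω) (Finset.mem_range.mpr hω)]
        · rw [Set.indicator_of_mem (by simp only [Set.mem_setOf_eq] : ω ∈ {ω' | N ω' = N ω}),
            hW (N ω)]
        · intro k _ hk
          refine Set.indicator_of_notMem ?_ _
          simp only [Set.mem_setOf_eq]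
          exact fun h => hk h.symm
      have hIeq : ∫ ω, (∑ k ∈ Finset.range n,
            ({ω' | N ω' = k}).indicator (fun _ => W k) ω) ∂P
          = ∑ k ∈ Finset.range n, W k * m k := by
        rw [integral_finset_sum _ fun k _ => hind_int k]
        refine Finset.sum_congr rfl fun k _ => ?_
        rw [integral_indicator_const (W k) (hNN k), smul_eq_mul, mul_comm, hm k, measureReal_def]
      have hreal : ∑ k ∈ Finset.range n, W k * m k ≤ 2 := by
        have hWtel : ∀ k, W k = 1 + ∑ j ∈ Finset.range k, (W (j+1) - W j) := by
          intro k
          rw [Finset.sum_range_sub (f := W), hW0]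
          ring
        have hstep : ∑ k ∈ Finset.range n, W k * m k
            = (∑ k ∈ Finset.range n, m k)
              + ∑ k ∈ Finset.range n, (∑ j ∈ Finset.range k, (W (j+1) - W j)) * m k := by
          rw [← Finset.sum_add_distrib]
          refine Finset.sum_congr rfl fun k _ => ?_
          rw [hWtel k]
          ring
        have hswap : ∑ k ∈ Finset.range n, (∑ j ∈ Finset.range k, (W (j+1) - W j)) * m k
            = ∑ j ∈ Finset.range n, (W (j+1) - W j) * ∑ k ∈ Finset.Ico (j+1) n, m k := by
          simp_rw [Finset.sum_mul, Finset.range_eq_Ico]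
          rw [← Finset.sum_Ico_Ico_comm' 0 n fun j k => (W (j+1) - W j) * m k]
          exact Finset.sum_congr rfl fun j _ => (Finset.mul_sum _ _ _).symm
        have hpart1 : ∑ k ∈ Finset.range n, m k ≤ 1 := by
          have h := hsum_m (Finset.range n) Set.univ (fun k _ => Set.subset_univ _)
          simp only [measure_univ, ENNReal.toReal_one] at h
          calc ∑ k ∈ Finset.range n, m k
              = ∑ k ∈ Finset.range n, (P {ω | N ω = k}).toReal :=
                Finset.sum_congr rfl fun k _ => hm k
            _ ≤ 1 := h
        obtain ⟨x, hx_def⟩ : ∃ x : ℝ, x = g - 1/c := ⟨_, rfl⟩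
        have hx2 : 2/c ≤ x := by
          rw [hx_def]
          have h3c : (3:ℝ)/c = 2/c + 1/c := by ring
          linarith [hgc]
        have hx0 : 0 < x := lt_of_lt_of_le (by positivity) hx2
        obtain ⟨r, hr_def⟩ : ∃ r : ℝ, r = Real.exp (-x) := ⟨_, rfl⟩
        have hr0 : 0 ≤ r := hr_def ▸ (Real.exp_pos _).le
        have hr1 : r < 1 := by
          rw [hr_def, ← Real.exp_zero]
          exact Real.exp_lt_exp.mpr (by linarith)
        obtain ⟨k₀, hk₀_def⟩ : ∃ k₀ : ℕ, k₀ = Nat.floor a := ⟨_, rfl⟩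
        have hk₀a : (k₀:ℝ) ≤ a := by rw [hk₀_def]; exact Nat.floor_le ha0
        have hak₀ : a < (k₀:ℝ) + 1 := by
          rw [hk₀_def]; exact_mod_cast Nat.lt_floor_add_one a
        have hterm : ∀ j ∈ Finset.range n,
            (W (j+1) - W j) * (∑ k ∈ Finset.Ico (j+1) n, m k)
            ≤ if j < k₀ then 0 else (1/c) * r ^ (j - k₀) := by
          intro j _
          by_cases hj : j < k₀
          · rw [if_pos hj]
            have hja : ((j:ℝ) + 1) ≤ a := by
              have hcast : (j:ℝ) + 1 ≤ (k₀:ℝ) := by exact_mod_cast Nat.succ_le_of_lt hj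
              linarith
            have hWj1 : W (j+1) = 1 := by
              rw [hW (j+1)]
              push_cast
              rw [max_eq_right (by linarith)]
              simp
            have hWj : W j = 1 := by
              rw [hW j]
              rw [max_eq_right (by linarith : (j:ℝ) - a ≤ 0)]
              simp
            rw [hWj1, hWj]
            simp
          · rw [if_neg hj]
            push_neg at hj
            have hjk : (k₀:ℝ) ≤ (j:ℝ) := by exact_mod_cast hj
            have haj : a < (j:ℝ) + 1 := by linarith
            -- bound on the increment of W
            have hu : max (((j:ℝ)+1) - a) 0 = ((j:ℝ)+1) - a := max_eq_left (by linarith)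
            have hvu : max ((j:ℝ) - a) 0 / c ≤ max (((j:ℝ)+1) - a) 0 / c :=
              div_le_div_of_nonneg_right (max_le_max (by linarith) le_rfl) hc0.le
            have hmax1 : max (((j:ℝ)+1) - a) 0 ≤ max ((j:ℝ) - a) 0 + 1 :=
              max_le (by linarith [le_max_left ((j:ℝ) - a) (0:ℝ)])
                (by linarith [le_max_right ((j:ℝ) - a) (0:ℝ)])
            have huv : max (((j:ℝ)+1) - a) 0 / c - max ((j:ℝ) - a) 0 / c ≤ 1/c := by
              rw [div_sub_div_same]
              exact div_le_div_of_nonneg_right (by linarith) hc0.le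
            have hD : W (j+1) - W j ≤ (1/c) * Real.exp ((((j:ℝ)+1) - a)/c) := by
              rw [hW (j+1), hW j]
              push_cast
              calc Real.exp (max (((j:ℝ)+1) - a) 0 / c) - Real.exp (max ((j:ℝ) - a) 0 / c)
                  ≤ (max (((j:ℝ)+1) - a) 0 / c - max ((j:ℝ) - a) 0 / c)
                    * Real.exp (max (((j:ℝ)+1) - a) 0 / c) := aux_exp_sub_exp hvu
                _ ≤ (1/c) * Real.exp (max (((j:ℝ)+1) - a) 0 / c) :=
                    mul_le_mul_of_nonneg_right huv (Real.exp_pos _).le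
                _ = (1/c) * Real.exp ((((j:ℝ)+1) - a)/c) := by rw [hu]
            have hsub2 : ∀ k ∈ Finset.Ico (j+1) n, {ω | N ω = k} ⊆ {ω | j+1 ≤ N ω} := by
              intro k hk ω hω
              simp only [Set.mem_setOf_eq] at hω ⊢
              rw [hω]; exact (Finset.mem_Ico.mp hk).1
            have hQsum : ∑ k ∈ Finset.Ico (j+1) n, m k
                ≤ Real.exp (-((((j:ℝ)+1) - a) * g)) := by
              have hs := hsum_m (Finset.Ico (j+1) n) {ω | j+1 ≤ N ω} hsub2
              have hs2 : ∑ k ∈ Finset.Ico (j+1) n, m k ≤ (P {ω | j+1 ≤ N ω}).toReal := by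
                calc ∑ k ∈ Finset.Ico (j+1) n, m k
                    = ∑ k ∈ Finset.Ico (j+1) n, (P {ω | N ω = k}).toReal :=
                      Finset.sum_congr rfl fun k _ => hm k
                  _ ≤ _ := hs
              have hq2 := hQ (j+1) (by omega) (by push_cast; linarith)
              push_cast at hq2
              exact hs2.trans hq2
            have hsumnn : 0 ≤ ∑ k ∈ Finset.Ico (j+1) n, m k :=
              Finset.sum_nonneg fun k _ => hm0 k
            have hgx : 0 ≤ g - 1/c := by rw [← hx_def]; exact hx0.le
            calc (W (j+1) - W j) * (∑ k ∈ Finset.Ico (j+1) n, m k)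
                ≤ ((1/c) * Real.exp ((((j:ℝ)+1) - a)/c))
                  * Real.exp (-((((j:ℝ)+1) - a) * g)) :=
                  mul_le_mul hD hQsum hsumnn (by positivity)
              _ = (1/c) * Real.exp ((((j:ℝ)+1) - a)/c + -((((j:ℝ)+1) - a) * g)) := by
                  rw [mul_assoc, ← Real.exp_add]
              _ ≤ (1/c) * r ^ (j - k₀) := by
                  have hcast : ((j - k₀ : ℕ) : ℝ) = (j:ℝ) - (k₀:ℝ) := Nat.cast_sub hj
                  have hexp_le2 : (((j:ℝ)+1) - a)/c + -((((j:ℝ)+1) - a) * g)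
                      ≤ ((j - k₀ : ℕ) : ℝ) * (-x) := by
                    rw [hcast, hx_def]
                    have hja1 : 0 ≤ ((j:ℝ)+1) - a := by linarith
                    have hjk0 : (j:ℝ) - (k₀:ℝ) ≤ ((j:ℝ)+1) - a := by linarith
                    have hexpand : (((j:ℝ)+1) - a)/c + -((((j:ℝ)+1) - a) * g)
                        = -((((j:ℝ)+1) - a) * (g - 1/c)) := by field_simp; ring
                    rw [hexpand]
                    have hmm := mul_le_mul_of_nonneg_right hjk0 hgx
                    calc -((((j:ℝ)+1) - a) * (g - 1/c))
                        ≤ -(((j:ℝ) - (k₀:ℝ)) * (g - 1/c)) := neg_le_neg hmm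
                      _ = ((j:ℝ) - (k₀:ℝ)) * -(g - 1/c) := by ring
                  calc (1/c) * Real.exp ((((j:ℝ)+1) - a)/c + -((((j:ℝ)+1) - a) * g))
                      ≤ (1/c) * Real.exp (((j - k₀:ℕ):ℝ) * (-x)) :=
                        mul_le_mul_of_nonneg_left (Real.exp_le_exp.mpr hexp_le2) (by positivity)
                    _ = (1/c) * r ^ (j - k₀) := by rw [Real.exp_nat_mul, ← hr_def]
        have hpart2 : ∑ j ∈ Finset.range n,
            (W (j+1) - W j) * (∑ k ∈ Finset.Ico (j+1) n, m k) ≤ 1 := by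
          have hb1 : ∑ j ∈ Finset.range n,
              (W (j+1) - W j) * (∑ k ∈ Finset.Ico (j+1) n, m k)
              ≤ ∑ j ∈ Finset.range n, (if j < k₀ then (0:ℝ) else (1/c) * r ^ (j - k₀)) :=
            Finset.sum_le_sum hterm
          have hb2 : ∑ j ∈ Finset.range n, (if j < k₀ then (0:ℝ) else (1/c) * r ^ (j - k₀))
              = ∑ j ∈ Finset.Ico k₀ n, (1/c) * r ^ (j - k₀) := by
            rw [Finset.sum_ite, Finset.sum_const_zero, zero_add]
            apply Finset.sum_congr ?_ fun _ _ => rfl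
            ext j
            simp only [Finset.mem_filter, Finset.mem_range, Finset.mem_Ico, not_lt]
            omega
          have hb3 : ∑ j ∈ Finset.Ico k₀ n, (1/c) * r ^ (j - k₀)
              = ∑ i ∈ Finset.range (n - k₀), (1/c) * r ^ i := by
            rw [Finset.sum_Ico_eq_sum_range]
            exact Finset.sum_congr rfl fun i _ => by rw [Nat.add_sub_cancel_left]
          have hb4 : ∑ i ∈ Finset.range (n - k₀), (1/c) * r ^ i ≤ (1/c) * (1-r)⁻¹ := by
            rw [← Finset.mul_sum]
            exact mul_le_mul_of_nonneg_left (aux_geom hr0 hr1 _) (by positivity)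
          have h2c : 2/(c+2) ≤ 1 - r := by
            have h1 : r ≤ Real.exp (-(2/c)) := by
              rw [hr_def]; exact Real.exp_le_exp.mpr (by linarith)
            have h2 : Real.exp (-(2/c)) ≤ (1 + 2/c)⁻¹ := aux_exp_neg_le_inv (by positivity)
            have h3 : (1 + 2/c)⁻¹ = c/(c+2) := by
              rw [show (1 + 2/c) = (c+2)/c by field_simp]
              rw [inv_div]
            have h4 : c/(c+2) + 2/(c+2) = 1 := by field_simp
            have h5 := h1.trans (h2.trans_eq h3)
            linarith
          have h5 : (1 - r)⁻¹ ≤ (c+2)/2 := by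
            have h6 := inv_anti₀ (show (0:ℝ) < 2/(c+2) by positivity) h2c
            rwa [show ((2:ℝ)/(c+2))⁻¹ = (c+2)/2 by rw [inv_div]] at h6
          have h7 : (1/c) * (1-r)⁻¹ ≤ 1 := by
            calc (1/c) * (1-r)⁻¹ ≤ (1/c) * ((c+2)/2) :=
                mul_le_mul_of_nonneg_left h5 (by positivity)
              _ = (c+2)/(2*c) := by rw [div_mul_div_comm, one_mul, mul_comm c 2]
              _ ≤ 1 := by rw [div_le_one (by positivity)]; linarith
          calc ∑ j ∈ Finset.range n, (W (j+1) - W j) * (∑ k ∈ Finset.Ico (j+1) n, m k)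
              ≤ ∑ j ∈ Finset.range n, (if j < k₀ then (0:ℝ) else (1/c) * r ^ (j - k₀)) := hb1
            _ = ∑ j ∈ Finset.Ico k₀ n, (1/c) * r ^ (j - k₀) := hb2
            _ = ∑ i ∈ Finset.range (n - k₀), (1/c) * r ^ i := hb3
            _ ≤ (1/c) * (1-r)⁻¹ := hb4
            _ ≤ 1 := h7
        calc ∑ k ∈ Finset.range n, W k * m k
            = (∑ k ∈ Finset.range n, m k)
              + ∑ k ∈ Finset.range n, (∑ j ∈ Finset.range k, (W (j+1) - W j)) * m k := hstep
          _ = (∑ k ∈ Finset.range n, m k)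
              + ∑ j ∈ Finset.range n, (W (j+1) - W j) * ∑ k ∈ Finset.Ico (j+1) n, m k := by
              rw [hswap]
          _ ≤ 1 + 1 := add_le_add hpart1 hpart2
          _ = 2 := by norm_num
      calc ∫⁻ ω, ENNReal.ofReal (Real.exp (max ((N ω : ℝ) - a) 0 / c)) ∂P
          = ∫⁻ ω, ENNReal.ofReal (∑ k ∈ Finset.range n,
              ({ω' | N ω' = k}).indicator (fun _ => W k) ω) ∂P := lintegral_congr_ae hae
        _ = ENNReal.ofReal (∫ ω, (∑ k ∈ Finset.range n,
              ({ω' | N ω' = k}).indicator (fun _ => W k) ω) ∂P) :=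
            (MeasureTheory.ofReal_integral_eq_lintegral_ofReal hgint hgnn).symm
        _ ≤ ENNReal.ofReal 2 := ENNReal.ofReal_le_ofReal (by rw [hIeq]; exact hreal)
        _ = 2 := by norm_num
  exact csInf_le ⟨0, fun x hx => hx.1.le⟩ hmem
end
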